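/- arXiv:1012.5316 — 6 statements merged into one kernel-verified Lean document; each statement's English description precedes it below -/
import Mathlib

section
/- Let n ≥ 1 and k ≥ 1 with k + 2 ≤ n. For every k-cochain β on the complete simplicial complex Δ_n there exists a (k−1)-cochain α such that n · ‖β + dα‖ ≤ (k+2) · ‖dβ‖. -/
/-!
The complex `Δ_n` is a cone over each of its vertices `v`: coning off at `v`,
`(cone v β) σ = β (σ ∪ {v})` for `v ∉ σ`, is a chain homotopy, so that
`β + d (cone v β) = cone v (d β)`. The norm of `cone v (d β)` is the number of faces in the
support of `d β` that contain `v`. Each such face has `k + 2` vertices, so these norms sum over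
`v` to `(k + 2)‖dβ‖`, and a vertex at which the norm is at most the average gives `α`.
-/

/-- The faces of the complete simplicial complex on vertex set `Fin n`,
indexed by cardinality: an element of `SFace n m` is an `m`-element subset
of `{1, …, n}` (so a `(m-1)`-dimensional face). -/
abbrev SFace (n m : ℕ) : Type := {σ : Finset (Fin n) // σ.card = m}

/-- The norm of a `ZMod 2`-cochain: the size of its support. -/
def cnorm {X : Type} [Fintype X] (β : X → ZMod 2) : ℕ :=
  (Finset.univ.filter fun x => β x ≠ 0).card

/-- The simplicial coboundary map on the complete complex: for a cochain `β`
on `m`-element subsets, `sd β` evaluated on an `(m+1)`-element subset `τ` is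
the sum of `β σ` over all `m`-element subsets `σ ⊆ τ`. -/
def sd {n m : ℕ} (β : SFace n m → ZMod 2) : SFace n (m + 1) → ZMod 2 :=
  fun τ => ∑ σ : SFace n m, if σ.1 ⊆ τ.1 then β σ else 0

open Finset

namespace SFace

variable {n m : ℕ}

def insert (v : Fin n) (σ : SFace n m) (hv : v ∉ σ.1) : SFace n (m + 1) :=
  ⟨Insert.insert v σ.1, by rw [card_insert_of_notMem hv, σ.2]⟩

def erase (v : Fin n) (τ : SFace n (m + 1)) (hv : v ∈ τ.1) : SFace n m :=
  ⟨τ.1.erase v, by rw [card_erase_of_mem hv, τ.2, Nat.add_sub_cancel]⟩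

@[simp]
lemma coe_insert (v : Fin n) (σ : SFace n m) (hv : v ∉ σ.1) :
    (insert v σ hv).1 = Insert.insert v σ.1 := rfl

@[simp]
lemma coe_erase (v : Fin n) (τ : SFace n (m + 1)) (hv : v ∈ τ.1) :
    (erase v τ hv).1 = τ.1.erase v := rfl

@[simp]
lemma insert_erase (v : Fin n) (τ : SFace n (m + 1)) (hv : v ∈ τ.1) :
    insert v (erase v τ hv) (notMem_erase v τ.1) = τ :=
  Subtype.ext (Finset.insert_erase hv)

@[simp]
lemma erase_insert (v : Fin n) (σ : SFace n m) (hv : v ∉ σ.1) :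
    erase v (insert v σ hv) (mem_insert_self v σ.1) = σ :=
  Subtype.ext (Finset.erase_insert hv)

lemma eq_of_subset {σ τ : SFace n m} (h : σ.1 ⊆ τ.1) : σ = τ :=
  Subtype.ext (eq_of_subset_of_card_le h (by rw [σ.2, τ.2]))

end SFace

variable {n m : ℕ}

def cone (v : Fin n) (β : SFace n (m + 1) → ZMod 2) (σ : SFace n m) : ZMod 2 :=
  if h : v ∈ σ.1 then 0 else β (SFace.insert v σ h)

lemma cone_of_mem (v : Fin n) (β : SFace n (m + 1) → ZMod 2) {σ : SFace n m} (hv : v ∈ σ.1) :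
    cone v β σ = 0 :=
  dif_pos hv

lemma cone_of_notMem (v : Fin n) (β : SFace n (m + 1) → ZMod 2) {σ : SFace n m}
    (hv : v ∉ σ.1) : cone v β σ = β (SFace.insert v σ hv) :=
  dif_neg hv

lemma notMem_of_cone_ne_zero {v : Fin n} {β : SFace n (m + 1) → ZMod 2} {σ : SFace n m}
    (h : cone v β σ ≠ 0) : v ∉ σ.1 :=
  fun hv => h (cone_of_mem v β hv)

lemma sum_cone (v : Fin n) (β : SFace n (m + 1) → ZMod 2) :
    ∑ σ, cone v β σ = ∑ ρ with v ∈ ρ.1, β ρ := by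
  rw [← sum_filter_of_ne (p := fun σ : SFace n m => v ∉ σ.1)
    fun _ _ h => notMem_of_cone_ne_zero h]
  refine sum_bij' (fun σ h => SFace.insert v σ (mem_filter.1 h).2)
    (fun ρ h => SFace.erase v ρ (mem_filter.1 h).2) (by simp) (by simp) (by simp) (by simp)
    fun σ _ => cone_of_notMem v β _

lemma sd_cone_of_mem (v : Fin n) (β : SFace n (m + 1) → ZMod 2) {τ : SFace n (m + 1)}
    (hv : v ∈ τ.1) : sd (cone v β) τ = β τ := by
  rw [sd, sum_eq_single (SFace.erase v τ hv)]
  · rw [if_pos (show (SFace.erase v τ hv).1 ⊆ τ.1 from erase_subset v τ.1),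
      cone_of_notMem v β (notMem_erase v τ.1), SFace.insert_erase]
  · intro σ _ hne
    by_cases hvσ : v ∈ σ.1
    · rw [cone_of_mem v β hvσ, ite_self]
    · exact if_neg fun hsub => hne (SFace.eq_of_subset (subset_erase.2 ⟨hsub, hvσ⟩))
  · exact fun h => absurd (mem_univ _) h

lemma sd_insert (v : Fin n) (β : SFace n (m + 1) → ZMod 2) {τ : SFace n (m + 1)}
    (hv : v ∉ τ.1) : sd β (SFace.insert v τ hv) = β τ + sd (cone v β) τ := by
  have hfaces_of_notMem : ∑ ρ with v ∉ ρ.1,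
      (if ρ.1 ⊆ (SFace.insert v τ hv).1 then β ρ else 0) = β τ := by
    rw [sum_eq_single_of_mem τ (mem_filter.2 ⟨mem_univ τ, hv⟩)]
    · exact if_pos (subset_insert v τ.1)
    · intro ρ hρ hne
      refine if_neg fun hsub => hne (SFace.eq_of_subset ?_)
      exact (subset_insert_iff_of_notMem (mem_filter.1 hρ).2).1 hsub
  have hfaces_of_mem : ∑ ρ with v ∈ ρ.1,
      (if ρ.1 ⊆ (SFace.insert v τ hv).1 then β ρ else 0) = sd (cone v β) τ := by
    rw [← sum_cone]
    refine sum_congr rfl fun σ _ => ?_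
    by_cases hvσ : v ∈ σ.1
    · simp [cone_of_mem _ _ hvσ]
    · simp [cone_of_notMem _ _ hvσ, insert_subset_insert_iff hvσ]
  rw [sd, ← sum_filter_not_add_sum_filter _ (fun ρ : SFace n (m + 1) => v ∈ ρ.1),
    hfaces_of_notMem, hfaces_of_mem]

theorem add_sd_cone (v : Fin n) (β : SFace n (m + 1) → ZMod 2) :
    β + sd (cone v β) = cone v (sd β) := by
  ext τ
  by_cases hv : v ∈ τ.1
  · rw [Pi.add_apply, sd_cone_of_mem v β hv, CharTwo.add_self_eq_zero, cone_of_mem _ _ hv]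
  · rw [Pi.add_apply, cone_of_notMem _ _ hv, sd_insert]

lemma cnorm_cone (v : Fin n) (γ : SFace n (m + 1) → ZMod 2) :
    cnorm (cone v γ) = #{ρ | v ∈ ρ.1 ∧ γ ρ ≠ 0} := by
  refine card_bij' (fun σ h => SFace.insert v σ (notMem_of_cone_ne_zero (mem_filter.1 h).2))
    (fun ρ h => SFace.erase v ρ (mem_filter.1 h).2.1) ?_ ?_ (by simp) (by simp)
  · intro σ h
    have h := (mem_filter.1 h).2
    simp only [mem_filter, mem_univ, true_and]
    exact ⟨mem_insert_self v σ.1, by rwa [cone_of_notMem v γ (notMem_of_cone_ne_zero h)] at h⟩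
  · intro ρ h
    obtain ⟨hvρ, hρ⟩ := (mem_filter.1 h).2
    simp only [mem_filter, mem_univ, true_and]
    rwa [cone_of_notMem v γ (notMem_erase v ρ.1), SFace.insert_erase]

lemma sum_cnorm_cone (γ : SFace n (m + 1) → ZMod 2) :
    ∑ v, cnorm (cone v γ) = (m + 1) * cnorm γ := by
  let r := fun (v : Fin n) (ρ : SFace n (m + 1)) => v ∈ ρ.1
  calc ∑ v, cnorm (cone v γ) = ∑ v, #((univ.filter (γ · ≠ 0)).bipartiteAbove r v) := by
        simp only [cnorm_cone, bipartiteAbove, filter_filter, and_comm]; rfl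
    _ = ∑ ρ with γ ρ ≠ 0, #(univ.bipartiteBelow r ρ) :=
        sum_card_bipartiteAbove_eq_sum_card_bipartiteBelow r
    _ = (m + 1) * cnorm γ := by
        rw [cnorm, mul_comm]
        refine sum_const_nat fun ρ _ => ?_
        simp only [bipartiteBelow, r, filter_mem_eq_inter, univ_inter, ρ.2]

theorem simplex_coisoperimetry_general (n k : ℕ) (β : SFace n (k + 1) → ZMod 2) :
    ∃ α : SFace n k → ZMod 2,
      n * cnorm (β + sd α) ≤ (k + 2) * cnorm (sd β) := by
  rcases Nat.eq_zero_or_pos n with rfl | hn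
  · exact ⟨0, by simp⟩
  obtain ⟨v, -, hv⟩ := exists_le_of_sum_le (univ_nonempty_iff.2 ⟨⟨0, hn⟩⟩)
    (f := fun v : Fin n => n * cnorm (cone v (sd β)))
    (g := fun _ => ∑ w, cnorm (cone w (sd β))) (by simp [← mul_sum])
  refine ⟨cone v β, ?_⟩
  rw [add_sd_cone, ← sum_cnorm_cone]
  exact hv

/-- for every `k`-cochain `β` on the complete complex `Δ_n`
(`n ≥ 1`, `k ≥ 1`, `k + 2 ≤ n`) there is a `(k-1)`-cochain `α` with
`n·‖β + dα‖ ≤ (k+2)·‖dβ‖`. -/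
theorem simplex_coisoperimetry (n k : ℕ) (hn : 1 ≤ n) (hk : 1 ≤ k) (hkn : k + 2 ≤ n)
    (β : SFace n (k + 1) → ZMod 2) :
    ∃ α : SFace n k → ZMod 2,
      n * cnorm (β + sd α) ≤ (k + 2) * cnorm (sd β) :=
  simplex_coisoperimetry_general n k β
end

section
/- Let n ≥ 1 and 0 ≤ j ≤ n − 1. For every j-cycle z in the n-dimensional cube Q_n with Z/2 coefficients, there exists a (j+1)-chain y with ∂y = z and vol_{j+1}(y) ≤ ((n−j)/(2(j+1))) · vol_j(z). -/
/-- A `j`-dimensional face of the solid `n`-cube `Q_n`: a function from the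
coordinates `{1, …, n}` to `{0, 1, *}` (encoded as `Option Bool`, with `none`
playing the role of `*`) having exactly `j` free (`*`) coordinates. -/
abbrev QFace (n j : ℕ) : Type :=
  {f : Fin n → Option Bool // (Finset.univ.filter fun i => f i = none).card = j}

/-- The volume of a `ZMod 2`-chain: the number of faces in its support. -/
def vol {X : Type} [Fintype X] (z : X → ZMod 2) : ℕ :=
  (Finset.univ.filter fun x => z x ≠ 0).card

/-- The boundary of a `(j+1)`-chain in the cube, with `ZMod 2` coefficients:
its value on a `j`-face `g` is the sum of `z f` over all `(j+1)`-faces `f`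
such that `g` is obtained from `f` by setting one free coordinate of `f`
to `0` or to `1` (equivalently, `f` is obtained from `g` by freeing one
non-free coordinate). -/
def qbdry {n j : ℕ} (z : QFace n (j + 1) → ZMod 2) : QFace n j → ZMod 2 :=
  fun g => ∑ f : QFace n (j + 1),
    if ∃ i, g.1 i ≠ none ∧ f.1 = Function.update g.1 i none then z f else 0

/-- A `j`-cycle in the cube: for `j ≥ 1`, a `j`-chain whose boundary vanishes;
for `j = 0`, a `0`-chain in the image of the boundary map. -/
def IsQCycle (n : ℕ) : (j : ℕ) → (QFace n j → ZMod 2) → Prop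
  | 0, z => ∃ y : QFace n 1 → ZMod 2, qbdry y = z
  | _ + 1, z => qbdry z = 0

/-!
Induct on the dimension of a face `c` of the cube containing the support of the cycle `z`.
For a free direction `d` of `c` and a side `b`, sweeping the faces of `z` on the facet
`x_d = !b` across `c` gives a chain `cyl d b z` with `∂ (cyl d b z) = z + proj d b z`, where
`proj d b z` is a cycle supported in the facet `x_d = b` of `c`; fill it there by induction.
Averaging over the `2 dim c` choices of `(d, b)` shows that some choice keeps the volume within
the bound. When `dim c = j` there is nothing to fill: a `j`-cycle supported in a single
`j`-face vanishes.
-/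

namespace CubeFilling

open Finset Function

variable {n j m : ℕ} {d : Fin n} {b : Bool}

def free (f : Fin n → Option Bool) : Finset (Fin n) := univ.filter (f · = none)

lemma card_free (g : QFace n j) : #(free g.1) = j := g.2

lemma free_update_none (f : Fin n → Option Bool) (i : Fin n) :
    free (update f i none) = insert i (free f) := by
  ext x
  by_cases h : x = i <;> simp [free, update_apply, h]

lemma free_update_some (f : Fin n → Option Bool) (i : Fin n) (b : Bool) :
    free (update f i (some b)) = (free f).erase i := by
  ext x
  by_cases h : x = i <;> simp [free, update_apply, h]

lemma card_free_update_none_le (f : Fin n → Option Bool) (i : Fin n) :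
    #(free (update f i none)) ≤ #(free f) + 1 := by
  rw [free_update_none]
  exact card_insert_le _ _

lemma card_free_update_some {f : Fin n → Option Bool} {i : Fin n} (hi : f i = none) (b : Bool) :
    #(free (update f i (some b))) = #(free f) - 1 := by
  rw [free_update_some, card_erase_of_mem (by simp [free, hi])]

/-- A chain extended by zero to all patterns, so that faces can be moved around with
`Function.update` without tracking their dimension. -/
def extend (z : QFace n j → ZMod 2) (f : Fin n → Option Bool) : ZMod 2 :=
  if h : #(free f) = j then z ⟨f, h⟩ else 0

@[simp]
lemma extend_val (z : QFace n j → ZMod 2) (f : QFace n j) : extend z f.1 = z f :=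
  dif_pos f.2

lemma extend_zero (f : Fin n → Option Bool) : extend (0 : QFace n j → ZMod 2) f = 0 := by
  unfold extend
  split_ifs <;> rfl

lemma extend_of_card_ne (z : QFace n j → ZMod 2) {f : Fin n → Option Bool}
    (h : #(free f) ≠ j) : extend z f = 0 :=
  dif_neg h

lemma exists_of_extend_ne_zero {z : QFace n j → ZMod 2} {f : Fin n → Option Bool}
    (h : extend z f ≠ 0) : ∃ g : QFace n j, g.1 = f ∧ z g ≠ 0 := by
  unfold extend at h
  split_ifs at h with hf
  · exact ⟨⟨f, hf⟩, rfl, h⟩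
  · exact absurd rfl h

lemma sum_ite_val_eq (y : QFace n m → ZMod 2) (u : Fin n → Option Bool) :
    ∑ f : QFace n m, (if f.1 = u then y f else 0) = extend y u := by
  by_cases hu : #(free u) = m
  · rw [Fintype.sum_eq_single ⟨u, hu⟩ fun f hf => if_neg fun h => hf (Subtype.ext h)]
    simp [extend, hu]
  · rw [extend_of_card_ne y hu]
    exact Fintype.sum_eq_zero _ fun f => if_neg fun (h : f.1 = u) => hu (h ▸ f.2)

lemma qbdry_apply (y : QFace n (j + 1) → ZMod 2) (g : QFace n j) :
    qbdry y g = ∑ i, extend y (update g.1 i none) := by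
  have hunique (f : QFace n (j + 1)) :
      (if ∃ i, g.1 i ≠ none ∧ f.1 = update g.1 i none then y f else 0)
        = ∑ i, if f.1 = update g.1 i none then y f else 0 := by
    by_cases hf : ∃ i, f.1 = update g.1 i none
    · obtain ⟨i, hi⟩ := hf
      have hfi : f.1 i = none := by simp [hi]
      have hgi : g.1 i ≠ none := by
        intro hgi
        have hfg : f.1 = g.1 := by rw [hi, update_eq_self_iff.mpr hgi.symm]
        have hcard : j + 1 = j := by rw [← f.2, hfg, g.2]
        omega
      rw [if_pos ⟨i, hgi, hi⟩, Fintype.sum_eq_single i, if_pos hi]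
      refine fun i' hi' => if_neg fun hfi' => ?_
      exact hgi (by rwa [hfi', update_of_ne (Ne.symm hi')] at hfi)
    · simp only [not_exists] at hf
      rw [if_neg fun ⟨i, _, hi⟩ => hf i hi]
      exact (Fintype.sum_eq_zero _ fun i => if_neg (hf i)).symm
  simp only [qbdry, hunique]
  rw [sum_comm]
  exact sum_congr rfl fun i _ => sum_ite_val_eq y _

lemma extend_add (y₁ y₂ : QFace n j → ZMod 2) (f : Fin n → Option Bool) :
    extend (y₁ + y₂) f = extend y₁ f + extend y₂ f := by
  unfold extend
  split_ifs <;> simp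

lemma qbdry_add (y₁ y₂ : QFace n (j + 1) → ZMod 2) :
    qbdry (y₁ + y₂) = qbdry y₁ + qbdry y₂ := by
  funext g
  simp only [Pi.add_apply, qbdry_apply, extend_add, sum_add_distrib]

lemma extend_qbdry (y : QFace n (j + 1) → ZMod 2) {f : Fin n → Option Bool}
    (hf : #(free f) ≤ j) : extend (qbdry y) f = ∑ i, extend y (update f i none) := by
  by_cases h : #(free f) = j
  · exact (dif_pos h).trans (qbdry_apply y ⟨f, h⟩)
  · rw [extend_of_card_ne _ h]
    refine (Fintype.sum_eq_zero _ fun i => extend_of_card_ne y ?_).symm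
    have := card_free_update_none_le f i
    omega

lemma sum_sum_eq_zero_of_symm {ι R : Type*} [Fintype ι] [Semiring R] [CharP R 2]
    (F : ι → ι → R) (hsymm : ∀ i i', F i i' = F i' i) (hdiag : ∀ i, F i i = 0) :
    ∑ i, ∑ i', F i i' = 0 := by
  rw [← Fintype.sum_prod_type']
  refine sum_ninvolution Prod.swap (fun p => ?_) (fun p hp hswap => ?_) (fun _ => mem_univ _)
    Prod.swap_swap
  · rw [Prod.fst_swap, Prod.snd_swap, hsymm p.2, CharTwo.add_self_eq_zero]
  · obtain ⟨a, b⟩ := p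
    obtain rfl : b = a := congrArg Prod.fst hswap
    exact hp (hdiag b)

lemma qbdry_qbdry (y : QFace n (j + 2) → ZMod 2) : qbdry (qbdry y) = 0 := by
  funext g
  have hcard (i : Fin n) : #(free (update g.1 i none)) ≤ j + 1 :=
    (card_free_update_none_le g.1 i).trans_eq (by rw [card_free])
  simp only [qbdry_apply, extend_qbdry y (hcard _), Pi.zero_apply]
  refine sum_sum_eq_zero_of_symm _ (fun i i' => ?_) (fun i => ?_)
  · rcases eq_or_ne i i' with rfl | hii'
    · rfl
    · rw [update_comm hii']
  · rw [update_idem]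
    exact extend_of_card_ne y (by have := hcard i; omega)

def reflect (g : QFace n j) (i : Fin n) : QFace n j :=
  ⟨update g.1 i ((g.1 i).map not), by
    have : free (update g.1 i ((g.1 i).map not)) = free g.1 := by
      ext x
      by_cases h : x = i <;> simp [free, update_apply, h]
    exact (congrArg card this).trans g.2⟩

lemma sum_qbdry (y : QFace n (j + 1) → ZMod 2) : ∑ g, qbdry y g = 0 := by
  simp only [qbdry_apply]
  rw [sum_comm]
  refine Fintype.sum_eq_zero _ fun i => ?_
  refine sum_ninvolution (reflect · i) (fun g => ?_) (fun g hg hfix => hg ?_) (fun _ => mem_univ _)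
    (fun g => ?_)
  · show _ + extend y (update (update g.1 i _) i none) = 0
    rw [update_idem, CharTwo.add_self_eq_zero]
  · have hgi : g.1 i = none := by
      have := congrFun (congrArg Subtype.val hfix) i
      simp only [reflect, update_self] at this
      cases h : g.1 i
      · rfl
      · simp [h] at this
    rw [update_eq_self_iff.mpr hgi.symm]
    exact extend_of_card_ne y (by rw [card_free]; omega)
  · apply Subtype.ext
    simp only [reflect, update_idem, update_self, Option.map_map]
    rw [update_eq_self_iff]
    cases g.1 i <;> simp

/-- The faces of `z` on the facet `x_d = !b`, swept across the cube in direction `d`. -/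
def cyl (d : Fin n) (b : Bool) (z : QFace n j → ZMod 2) : QFace n (j + 1) → ZMod 2 :=
  fun F => if F.1 d = none then extend z (update F.1 d (some !b)) else 0

/-- The projection of `z` onto the facet `x_d = b`: faces on the opposite facet are moved
across, faces transverse to `d` collapse. -/
def proj (d : Fin n) (b : Bool) (z : QFace n j → ZMod 2) : QFace n j → ZMod 2 :=
  fun g => if g.1 d = some b then z g + extend z (update g.1 d (some !b)) else 0

lemma extend_cyl (z : QFace n j → ZMod 2) (f : Fin n → Option Bool) :
    extend (cyl d b z) f = if f d = none then extend z (update f d (some !b)) else 0 := by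
  by_cases hf : #(free f) = j + 1
  · exact dif_pos hf
  · rw [extend_of_card_ne _ hf]
    split_ifs with hfd
    · have : 0 < #(free f) := card_pos.mpr ⟨d, by simp [free, hfd]⟩
      exact (extend_of_card_ne z (by rw [card_free_update_some hfd]; omega)).symm
    · rfl

lemma qbdry_cyl_of_ne_none (z : QFace n j → ZMod 2) {g : QFace n j} (hg : g.1 d ≠ none) :
    qbdry (cyl d b z) g = z g + proj d b z g := by
  rw [qbdry_apply, Fintype.sum_eq_single d fun i hi => by
    rw [extend_cyl, if_neg (by rwa [update_of_ne (Ne.symm hi)])]]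
  rw [extend_cyl, if_pos (update_self _ _ _), update_idem]
  obtain ⟨v, hv⟩ := Option.ne_none_iff_exists'.mp hg
  unfold proj
  by_cases hvb : v = b
  · rw [if_pos (hvb ▸ hv)]
    grind
  · have hv' : some (!b) = g.1 d := by rw [hv]; cases v <;> cases b <;> simp_all
    rw [if_neg (by rw [hv]; simpa using hvb), update_eq_self_iff.mpr hv', extend_val, add_zero]

lemma qbdry_cyl_of_eq_none (z : QFace n (j + 1) → ZMod 2) {g : QFace n (j + 1)}
    (hg : g.1 d = none) :
    qbdry (cyl d b z) g = z g + extend (qbdry z) (update g.1 d (some !b)) := by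
  have hgd : update g.1 d none = g.1 := update_eq_self_iff.mpr hg.symm
  rw [qbdry_apply, extend_qbdry z (by rw [card_free_update_some hg, card_free]; omega),
    Fintype.sum_eq_add_sum_compl d, Fintype.sum_eq_add_sum_compl d, extend_cyl,
    if_pos (update_self _ _ _), update_idem, update_idem, hgd,
    extend_val, extend_of_card_ne z (by rw [card_free_update_some hg, card_free]; omega),
    zero_add, CharTwo.add_cancel_left]
  refine sum_congr rfl fun i hi => ?_
  have hid : i ≠ d := by simpa using hi
  rw [extend_cyl, if_pos (by rwa [update_of_ne (Ne.symm hid)]), update_comm hid]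

lemma qbdry_cyl {z : QFace n j → ZMod 2} (hz : IsQCycle n j z) :
    qbdry (cyl d b z) = z + proj d b z := by
  funext g
  cases j with
  | zero =>
    refine qbdry_cyl_of_ne_none z fun hgd => ?_
    have hd : d ∈ free g.1 := by simp [free, hgd]
    rw [card_eq_zero.mp (card_free g)] at hd
    exact absurd hd (notMem_empty d)
  | succ j =>
    by_cases hgd : g.1 d = none
    · rw [qbdry_cyl_of_eq_none z hgd, hz, extend_zero]
      simp [proj, hgd]
    · exact qbdry_cyl_of_ne_none z hgd

lemma isQCycle_proj {z : QFace n j → ZMod 2} (hz : IsQCycle n j z) :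
    IsQCycle n j (proj d b z) := by
  have hproj : proj d b z = z + qbdry (cyl d b z) := by
    funext g
    rw [Pi.add_apply, qbdry_cyl hz, Pi.add_apply, CharTwo.add_cancel_left]
  cases j with
  | zero =>
    obtain ⟨w, rfl⟩ := hz
    exact ⟨w + cyl d b (qbdry w), by rw [qbdry_add, hproj]⟩
  | succ j =>
    change qbdry _ = 0
    rw [hproj, qbdry_add, qbdry_qbdry, add_zero]
    exact hz

def IsFaceOf (f c : Fin n → Option Bool) : Prop :=
  ∀ i b, c i = some b → f i = some b

section IsFaceOf

variable {f c c' : Fin n → Option Bool}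

lemma IsFaceOf.trans (h : IsFaceOf f c) (h' : IsFaceOf c c') : IsFaceOf f c' :=
  fun i b hi => h i b (h' i b hi)

lemma IsFaceOf.of_update {v : Option Bool} (h : IsFaceOf (update f d v) c) (hd : c d = none) :
    IsFaceOf f c := by
  intro i b hi
  have hid : i ≠ d := by rintro rfl; simp [hd] at hi
  simpa [update_of_ne hid] using h i b hi

lemma isFaceOf_update_some (hd : c d = none) (b : Bool) : IsFaceOf (update c d (some b)) c :=
  fun i v hi => by rwa [update_of_ne (by rintro rfl; simp [hd] at hi)]

lemma IsFaceOf.free_subset (h : IsFaceOf f c) : free f ⊆ free c := by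
  intro i hi
  simp only [free, mem_filter, mem_univ, true_and] at hi ⊢
  cases hc : c i with
  | none => rfl
  | some b => simp [h i b hc] at hi

lemma IsFaceOf.eq_of_card_le (h : IsFaceOf f c) (hcard : #(free c) ≤ #(free f)) : f = c := by
  have hfree := eq_of_subset_of_card_le h.free_subset hcard
  funext i
  cases hc : c i with
  | none =>
    have hi : i ∈ free f := hfree ▸ by simp [free, hc]
    simpa [free] using hi
  | some b => exact h i b hc

end IsFaceOf

def SupportedIn (c : Fin n → Option Bool) (z : QFace n j → ZMod 2) : Prop :=
  ∀ f, z f ≠ 0 → IsFaceOf f.1 c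

namespace SupportedIn

variable {c : Fin n → Option Bool} {z : QFace n j → ZMod 2}

lemma isFaceOf_of_extend_ne_zero (hz : SupportedIn c z) {f : Fin n → Option Bool}
    (h : extend z f ≠ 0) : IsFaceOf f c := by
  obtain ⟨g, rfl, hg⟩ := exists_of_extend_ne_zero h
  exact hz g hg

lemma add {y₁ y₂ : QFace n j → ZMod 2} (h₁ : SupportedIn c y₁) (h₂ : SupportedIn c y₂) :
    SupportedIn c (y₁ + y₂) := by
  intro f hf
  by_cases h₁f : y₁ f = 0
  · exact h₂ f (by simpa [h₁f] using hf)
  · exact h₁ f h₁f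

lemma mono {c' : Fin n → Option Bool} (hz : SupportedIn c z) (h : IsFaceOf c c') :
    SupportedIn c' z :=
  fun f hf => (hz f hf).trans h

lemma cyl (hz : SupportedIn c z) (hd : c d = none) : SupportedIn c (cyl d b z) := by
  intro F hF
  unfold CubeFilling.cyl at hF
  split_ifs at hF
  exacts [(hz.isFaceOf_of_extend_ne_zero hF).of_update hd, absurd rfl hF]

lemma proj (hz : SupportedIn c z) (hd : c d = none) :
    SupportedIn (update c d (some b)) (proj d b z) := by
  intro g hg
  unfold CubeFilling.proj at hg
  split_ifs at hg with hgd
  swap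
  · exact absurd rfl hg
  have hgc : IsFaceOf g.1 c := by
    by_cases hzg : z g = 0
    · rw [hzg, zero_add] at hg
      exact (hz.isFaceOf_of_extend_ne_zero hg).of_update hd
    · exact hz g hzg
  intro i v hi
  by_cases hid : i = d
  · subst hid
    rw [update_self] at hi
    rw [hgd, hi]
  · rw [update_of_ne hid] at hi
    exact hgc i v hi

lemma val_eq_of_ne_zero (hz : SupportedIn c z) (hc : #(free c) = j) {f : QFace n j}
    (hf : z f ≠ 0) : f.1 = c :=
  (hz f hf).eq_of_card_le (by rw [hc, card_free])

end SupportedIn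

lemma eq_zero_of_supportedIn {c : Fin n → Option Bool} (hc : #(free c) = j)
    {z : QFace n j → ZMod 2} (hz : IsQCycle n j z) (hs : SupportedIn c z) : z = 0 := by
  have hsupp {u : Fin n → Option Bool} (h : extend z u ≠ 0) : u = c := by
    obtain ⟨g, rfl, hg⟩ := exists_of_extend_ne_zero h
    exact hs.val_eq_of_ne_zero hc hg
  suffices h : extend z c = 0 by
    funext f
    by_contra hf
    exact hf (by rw [← extend_val z f, hs.val_eq_of_ne_zero hc hf, h]; rfl)
  cases j with
  | zero =>
    obtain ⟨w, rfl⟩ := hz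
    rw [← sum_qbdry w, ← sum_ite_val_eq]
    refine sum_congr rfl fun f _ => ite_eq_left_iff.mpr fun hf => ?_
    by_contra h
    exact hf (hs.val_eq_of_ne_zero hc (Ne.symm h))
  | succ j =>
    obtain ⟨d, hd⟩ := card_pos.mp (by rw [hc]; exact j.succ_pos)
    have hcd : c d = none := by simpa [free] using hd
    have hzero := congrFun hz
      ⟨update c d (some true), (card_free_update_some hcd true).trans (by simp [hc])⟩
    rwa [Pi.zero_apply, qbdry_apply, Fintype.sum_eq_single d, update_idem,
      update_eq_self_iff.mpr hcd.symm] at hzero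
    intro i hid
    by_contra h
    have := congrFun (hsupp h) d
    simp [update_of_ne (Ne.symm hid), hcd] at this

lemma vol_add_le {X : Type} [Fintype X] (a b : X → ZMod 2) : vol (a + b) ≤ vol a + vol b := by
  classical
  refine (card_le_card fun x hx => ?_).trans (card_union_le _ _)
  simp only [mem_filter, mem_univ, true_and, mem_union, Pi.add_apply] at hx ⊢
  by_contra! h
  exact hx (by rw [h.1, h.2, add_zero])

lemma vol_le_of_forall_exists {z : QFace n j → ZMod 2} {s : Finset (QFace n m)}
    (φ : (Fin n → Option Bool) → Fin n → Option Bool)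
    (h : ∀ f, z f ≠ 0 → ∃ g ∈ s, φ g.1 = f.1) : vol z ≤ #s := by
  classical
  calc vol z = #((univ.filter fun f => z f ≠ 0).map (Embedding.subtype _)) := (card_map _).symm
    _ ≤ #((s.map (Embedding.subtype _)).image φ) := card_le_card fun u hu => by
        simp only [mem_map, mem_filter, mem_univ, true_and, Embedding.subtype_apply] at hu
        obtain ⟨f, hf, rfl⟩ := hu
        obtain ⟨g, hg, hφ⟩ := h f hf
        exact mem_image.mpr ⟨g.1, mem_map_of_mem _ hg, hφ⟩
    _ ≤ #(s.map (Embedding.subtype _)) := card_image_le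
    _ = #s := card_map _

def numOnFacet (z : QFace n j → ZMod 2) (d : Fin n) (b : Bool) : ℕ :=
  #{f | z f ≠ 0 ∧ f.1 d = some b}

lemma vol_cyl_le (z : QFace n j → ZMod 2) : vol (cyl d b z) ≤ numOnFacet z d (!b) := by
  refine vol_le_of_forall_exists (update · d none) fun F hF => ?_
  unfold cyl at hF
  split_ifs at hF with hFd
  swap
  · exact absurd rfl hF
  obtain ⟨g, hg, hzg⟩ := exists_of_extend_ne_zero hF
  refine ⟨g, by simp [hzg, hg], ?_⟩
  rw [hg, update_idem, update_eq_self_iff.mpr hFd.symm]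

lemma vol_proj_le (z : QFace n j → ZMod 2) :
    vol (proj d b z) ≤ numOnFacet z d b + numOnFacet z d (!b) := by
  classical
  refine (vol_le_of_forall_exists (update · d (some b)) fun g hg => ?_).trans (card_union_le _ _)
  unfold proj at hg
  split_ifs at hg with hgd
  swap
  · exact absurd rfl hg
  by_cases hzg : z g = 0
  · rw [hzg, zero_add] at hg
    obtain ⟨g', hg', hzg'⟩ := exists_of_extend_ne_zero hg
    refine ⟨g', by simp [hzg', hg'], ?_⟩
    rw [hg', update_idem, update_eq_self_iff.mpr hgd.symm]
  · exact ⟨g, by simp [hzg, hgd], update_eq_self_iff.mpr hgd.symm⟩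

lemma sum_numOnFacet {c : Fin n → Option Bool} {z : QFace n j → ZMod 2} (hs : SupportedIn c z) :
    ∑ d ∈ free c, ∑ b, numOnFacet z d b = (#(free c) - j) * vol z := by
  have hfacet (d : Fin n) (b : Bool) :
      numOnFacet z d b = ∑ f ∈ univ.filter (z · ≠ 0), if f.1 d = some b then 1 else 0 := by
    rw [numOnFacet, ← filter_filter, card_filter]
  have hpinned (f : QFace n j) (hf : z f ≠ 0) :
      ∑ d ∈ free c, ∑ b : Bool, (if f.1 d = some b then 1 else 0) = #(free c) - j := by
    have hbool (d : Fin n) :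
        ∑ b : Bool, (if f.1 d = some b then 1 else 0) = if d ∉ free f.1 then 1 else 0 := by
      cases h : f.1 d <;> simp [free, h]
    have hsdiff : (free c).filter (· ∉ free f.1) = free c \ free f.1 := by
      ext
      simp
    rw [sum_congr rfl fun d _ => hbool d, ← card_filter, hsdiff,
      card_sdiff_of_subset (hs f hf).free_subset, card_free]
  simp only [hfacet]
  calc ∑ d ∈ free c, ∑ b, ∑ f ∈ univ.filter (z · ≠ 0), (if f.1 d = some b then 1 else 0)
      = ∑ d ∈ free c, ∑ f ∈ univ.filter (z · ≠ 0), ∑ b, (if f.1 d = some b then 1 else 0) :=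
        sum_congr rfl fun d _ => sum_comm
    _ = ∑ f ∈ univ.filter (z · ≠ 0), ∑ d ∈ free c, ∑ b, (if f.1 d = some b then 1 else 0) :=
        sum_comm
    _ = ∑ f ∈ univ.filter (z · ≠ 0), (#(free c) - j) :=
        sum_congr rfl fun f hf => hpinned f (mem_filter.mp hf).2
    _ = (#(free c) - j) * vol z := by rw [sum_const, smul_eq_mul, mul_comm, vol]

/-- Averaging over the `2 (j + k + 1)` pairs `(d, b)`: each face of `z` contributes to
`k + 1` cylinders and to `2 (k + 1)` projections. -/
lemma exists_cyl_proj_le {k : ℕ} {c : Fin n → Option Bool} (hc : #(free c) = j + k + 1)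
    {z : QFace n j → ZMod 2} (hs : SupportedIn c z) :
    ∃ d, c d = none ∧ ∃ b,
      2 * (j + 1) * vol (cyl d b z) + k * vol (proj d b z) ≤ (k + 1) * vol z := by
  have htotal : ∑ d ∈ free c, ∑ b, numOnFacet z d b = (k + 1) * vol z := by
    rw [sum_numOnFacet hs, hc]
    congr 1
    omega
  have hcyl : ∑ p ∈ free c ×ˢ univ, vol (cyl p.1 p.2 z) ≤ (k + 1) * vol z :=
    calc ∑ p ∈ free c ×ˢ univ, vol (cyl p.1 p.2 z)
        ≤ ∑ p ∈ free c ×ˢ univ, numOnFacet z p.1 (!p.2) := sum_le_sum fun p _ => vol_cyl_le z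
      _ = (k + 1) * vol z := by
        rw [sum_product, ← htotal]
        exact sum_congr rfl fun d _ => by simp [add_comm]
  have hproj : ∑ p ∈ free c ×ˢ univ, vol (proj p.1 p.2 z) ≤ 2 * ((k + 1) * vol z) :=
    calc ∑ p ∈ free c ×ˢ univ, vol (proj p.1 p.2 z)
        ≤ ∑ p ∈ free c ×ˢ univ, (numOnFacet z p.1 p.2 + numOnFacet z p.1 (!p.2)) :=
          sum_le_sum fun p _ => vol_proj_le z
      _ = 2 * ((k + 1) * vol z) := by
        rw [sum_product, ← htotal, mul_sum]
        exact sum_congr rfl fun d _ => by simp; ring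
  have hne : (free c ×ˢ (univ : Finset Bool)).Nonempty :=
    (card_pos.mp (by rw [hc]; omega)).product univ_nonempty
  obtain ⟨⟨d, b⟩, hp, hle⟩ := exists_le_of_sum_le hne
    (f := fun p => 2 * (j + 1) * vol (cyl p.1 p.2 z) + k * vol (proj p.1 p.2 z))
    (g := fun _ => (k + 1) * vol z) (by
      rw [sum_add_distrib, ← mul_sum, ← mul_sum, sum_const, card_product, hc, card_univ,
        Fintype.card_bool, smul_eq_mul]
      nlinarith)
  exact ⟨d, by simpa [free] using (mem_product.mp hp).1, b, hle⟩

theorem exists_filling_of_supportedIn (k : ℕ) {c : Fin n → Option Bool} (hc : #(free c) = j + k)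
    {z : QFace n j → ZMod 2} (hz : IsQCycle n j z) (hs : SupportedIn c z) :
    ∃ y : QFace n (j + 1) → ZMod 2,
      qbdry y = z ∧ SupportedIn c y ∧ 2 * (j + 1) * vol y ≤ k * vol z := by
  induction k generalizing c z with
  | zero =>
    refine ⟨0, ?_, fun f hf => absurd rfl hf, by simp [vol]⟩
    rw [eq_zero_of_supportedIn hc hz hs]
    funext g
    simp [qbdry_apply, extend_zero]
  | succ k ih =>
    obtain ⟨d, hd, b, hle⟩ := exists_cyl_proj_le (k := k) (by omega) hs
    obtain ⟨y, hy, hys, hyvol⟩ := ih (c := update c d (some b))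
      (by rw [card_free_update_some hd]; omega) (isQCycle_proj hz) (hs.proj hd)
    refine ⟨cyl d b z + y, ?_, (hs.cyl hd).add (hys.mono (isFaceOf_update_some hd b)), ?_⟩
    · funext g
      rw [qbdry_add, qbdry_cyl hz, hy, Pi.add_apply, Pi.add_apply, CharTwo.add_cancel_right]
    · have := vol_add_le (cyl d b z) y
      nlinarith

end CubeFilling

theorem cube_filling_general (n j : ℕ) (hj : j ≤ n - 1)
    (z : QFace n j → ZMod 2) (hz : IsQCycle n j z) :
    ∃ y : QFace n (j + 1) → ZMod 2, qbdry y = z ∧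
      (vol y : ℝ) ≤ (((n : ℝ) - j) / (2 * ((j : ℝ) + 1))) * (vol z : ℝ) := by
  obtain ⟨y, hy, -, hvol⟩ := CubeFilling.exists_filling_of_supportedIn (n - j)
    (c := fun _ => none) (by simp [CubeFilling.free]; omega) hz fun _ _ _ _ h => nomatch h
  refine ⟨y, hy, ?_⟩
  have hvol' : 2 * ((j : ℝ) + 1) * vol y ≤ ((n : ℝ) - j) * vol z := by
    rw [← Nat.cast_sub (by omega)]
    exact_mod_cast hvol
  rw [div_mul_eq_mul_div, le_div_iff₀ (by positivity)]
  linarith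

/-- for `n ≥ 1` and `0 ≤ j ≤ n - 1`, every `j`-cycle `z` in the
`n`-cube (with `ZMod 2` coefficients) is filled by a `(j+1)`-chain `y` with
`∂y = z` and `vol_{j+1}(y) ≤ ((n-j)/(2(j+1)))·vol_j(z)`. -/
theorem cube_filling (n j : ℕ) (hn : 1 ≤ n) (hj : j ≤ n - 1)
    (z : QFace n j → ZMod 2) (hz : IsQCycle n j z) :
    ∃ y : QFace n (j + 1) → ZMod 2, qbdry y = z ∧
      (vol y : ℝ) ≤ (((n : ℝ) - j) / (2 * ((j : ℝ) + 1))) * (vol z : ℝ) :=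
  cube_filling_general n j hj z hz
end

section
/- Let n ≥ 1 and k ≥ 1 with k + 1 ≤ n − 1. For every k-cochain β on the n-dimensional cross-polytope there exists a (k−1)-cochain α such that ‖β + dα‖ ≤ ((k+2)/(2(n−k−1))) · ‖dβ‖. Consequently the k-th coboundary expansion of the cross-polytope satisfies h^k ≥ 2(n−k−1)/(k+2), i.e., for every k-cochain β that is not a coboundary, ‖dβ‖ ≥ (2(n−k−1)/(k+2)) · ‖[β]‖. -/
/-- A face of the `n`-dimensional cross-polytope, indexed by the number of its
vertices: an element of `XFace n m` is a pair `(S, s)` of an `m`-element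
subset `S ⊆ {1, …, n}` together with a sign `s : S → {+1, -1}`, encoded as a
function `f : Fin n → Option Bool` with exactly `m` coordinates not equal to
`none` (`some true` = `+1`, `some false` = `-1`).  Thus `XFace n (k+1)` is the
set of `k`-dimensional faces. -/
abbrev XFace (n m : ℕ) : Type :=
  {f : Fin n → Option Bool // (Finset.univ.filter fun i => f i ≠ none).card = m}

/-- The coboundary map of the cross-polytope: for a cochain `β` on faces with
`m` vertices, `xd β` evaluated on a face `g` with `m+1` vertices is the sum of
`β f` over the `m+1` faces `f` obtained from `g` by deleting one vertex (with
the signs of the remaining vertices retained). -/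
def xd {n m : ℕ} (β : XFace n m → ZMod 2) : XFace n (m + 1) → ZMod 2 :=
  fun g => ∑ f : XFace n m,
    if ∃ i, g.1 i ≠ none ∧ f.1 = Function.update g.1 i none then β f else 0

/-- A `k`-cochain (on faces with `k+1` vertices) is a coboundary if it is
`dα` for some `(k-1)`-cochain `α`. -/
def IsXCob {n k : ℕ} (β : XFace n (k + 1) → ZMod 2) : Prop :=
  ∃ α : XFace n k → ZMod 2, xd α = β

/-- The quotient norm `‖[β]‖ = min_α ‖β + dα‖` of a `k`-cochain on the
cross-polytope. -/
noncomputable def xqnorm {n k : ℕ} (β : XFace n (k + 1) → ZMod 2) : ℕ :=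
  sInf {m | ∃ α : XFace n k → ZMod 2, m = cnorm (β + xd α)}

/-!
Replace `β` by a representative of minimal norm in its class; this changes neither `‖[β]‖` nor
`dβ`. For each of the `2n` vertices `v`, the competitor `β + d(cone_v β)` vanishes on faces
through `v`, equals `dβ(f ∪ v)` on faces `f` avoiding both `v` and `-v`, and on a face through
`-v` is nonzero only where `β` or its reflection through `v` is. Minimality bounds `‖β‖` by
the size of these supports; summing over all vertices counts every face of `dβ` exactly `k + 2`
times and every face of `β` at most `2(k + 1)` times, so
`2n ‖β‖ ≤ (k + 2) ‖dβ‖ + 2(k + 1) ‖β‖`.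
-/

namespace CrossPolytope

open Finset Function

lemma sum_sum_erase_eq_zero_of_symm {ι R : Type*} [DecidableEq ι] [Ring R] [CharP R 2]
    (s : Finset ι) (F : ι → ι → R) (hF : ∀ i j, F i j = F j i) :
    ∑ i ∈ s, ∑ j ∈ s.erase i, F i j = 0 := by
  rw [← sum_finset_product' s.offDiag s (fun i => s.erase i) (by simp [and_comm, ne_comm])]
  refine sum_involution (fun p _ => p.swap) (fun p _ => ?_) (fun p hp _ h => ?_) (fun p hp => ?_)
    (fun p _ => rfl)
  · rw [Prod.fst_swap, Prod.snd_swap, hF p.2, CharTwo.add_self_eq_zero]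
  · exact (mem_offDiag.1 hp).2.2 (congrArg Prod.snd h)
  · obtain ⟨h₁, h₂, h₁₂⟩ := mem_offDiag.1 hp
    exact mem_offDiag.2 ⟨h₂, h₁, h₁₂.symm⟩

/-- Faces of all dimensions, the empty face included. -/
abbrev SignedSet (n : ℕ) : Type := Fin n → Option Bool

variable {n m : ℕ}

def dom (f : SignedSet n) : Finset (Fin n) := univ.filter fun i => f i ≠ none

@[simp] lemma mem_dom {f : SignedSet n} {i : Fin n} : i ∈ dom f ↔ f i ≠ none := by
  simp [dom]

lemma dom_update_none (f : SignedSet n) (i : Fin n) :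
    dom (update f i none) = (dom f).erase i := by
  ext j
  by_cases h : j = i <;> simp [h]

lemma dom_update_some {f : SignedSet n} {i : Fin n} (hi : f i = none) (b : Bool) :
    dom (update f i (some b)) = insert i (dom f) := by
  ext j
  by_cases h : j = i <;> simp [h, hi]

def supp (B : SignedSet n → ZMod 2) : Finset (SignedSet n) := univ.filter fun f => B f ≠ 0

def IsHomogeneous (m : ℕ) (B : SignedSet n → ZMod 2) : Prop :=
  ∀ f, B f ≠ 0 → (dom f).card = m

def coboundary (B : SignedSet n → ZMod 2) (g : SignedSet n) : ZMod 2 :=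
  ∑ i ∈ dom g, B (update g i none)

lemma coboundary_add (B C : SignedSet n → ZMod 2) :
    coboundary (B + C) = coboundary B + coboundary C := by
  funext g
  simp [coboundary, sum_add_distrib]

lemma coboundary_coboundary (B : SignedSet n → ZMod 2) : coboundary (coboundary B) = 0 := by
  funext g
  simp only [coboundary, dom_update_none, Pi.zero_apply]
  exact sum_sum_erase_eq_zero_of_symm _ _ fun i j => by
    by_cases h : i = j
    · rw [h]
    · rw [update_comm h]

lemma IsHomogeneous.coboundary {B : SignedSet n → ZMod 2} (hB : IsHomogeneous m B) :
    IsHomogeneous (m + 1) (coboundary B) := by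
  intro g hg
  obtain ⟨i, hi, hBi⟩ := exists_ne_zero_of_sum_ne_zero hg
  have := hB _ hBi
  rw [dom_update_none, card_erase_of_mem hi] at this
  have := card_pos.2 ⟨i, hi⟩
  omega

def zeroExt (β : XFace n m → ZMod 2) (f : SignedSet n) : ZMod 2 :=
  if h : (dom f).card = m then β ⟨f, h⟩ else 0

lemma zeroExt_apply (β : XFace n m → ZMod 2) (g : XFace n m) : zeroExt β g.1 = β g :=
  dif_pos g.2

lemma isHomogeneous_zeroExt (β : XFace n m → ZMod 2) : IsHomogeneous m (zeroExt β) := by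
  intro f hf
  by_contra h
  exact hf (dif_neg h)

lemma zeroExt_restrict {B : SignedSet n → ZMod 2} (hB : IsHomogeneous m B) :
    zeroExt (fun g : XFace n m => B g.1) = B := by
  funext f
  by_cases h : (dom f).card = m
  · exact dif_pos h
  · rw [zeroExt, dif_neg h]
    by_contra hf
    exact h (hB f (Ne.symm hf))

lemma zeroExt_add (β γ : XFace n m → ZMod 2) : zeroExt (β + γ) = zeroExt β + zeroExt γ := by
  funext f
  by_cases h : (dom f).card = m <;> simp [zeroExt, h]

lemma cnorm_zeroExt (β : XFace n m → ZMod 2) : cnorm (zeroExt β) = cnorm β := by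
  refine (card_bij (fun g _ => g.1) (fun g hg => ?_) (fun _ _ _ _ => Subtype.ext)
    fun f hf => ?_).symm
  · simpa [supp, zeroExt_apply] using hg
  · have hf' : zeroExt β f ≠ 0 := (mem_filter.1 hf).2
    have hm := isHomogeneous_zeroExt β f hf'
    refine ⟨⟨f, hm⟩, mem_filter.2 ⟨mem_univ _, ?_⟩, rfl⟩
    rwa [← zeroExt_apply β ⟨f, hm⟩]

lemma xd_apply (β : XFace n m → ZMod 2) (g : XFace n (m + 1)) :
    xd β g = coboundary (zeroExt β) g.1 := by
  have card_dom_erase {i} (hi : i ∈ dom g.1) : (dom (update g.1 i none)).card = m := by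
    have hg : (dom g.1).card = m + 1 := g.2
    rw [dom_update_none, card_erase_of_mem hi, hg, Nat.add_sub_cancel]
  rw [xd, coboundary, ← sum_filter]
  refine (sum_bij (fun i hi => ⟨update g.1 i none, card_dom_erase hi⟩) (fun i hi => ?_)
    (fun i hi j _ hij => ?_) (fun f hf => ?_)
    fun i hi => zeroExt_apply β ⟨_, card_dom_erase hi⟩).symm
  · exact mem_filter.2 ⟨mem_univ _, i, mem_dom.1 hi, rfl⟩
  · by_contra hne
    have := congrFun (congrArg Subtype.val hij) i
    simp only [update_self, update_of_ne hne] at this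
    exact mem_dom.1 hi this.symm
  · obtain ⟨i, hi, hfi⟩ := (mem_filter.1 hf).2
    exact ⟨i, mem_dom.2 hi, Subtype.ext hfi.symm⟩

lemma zeroExt_xd (β : XFace n m → ZMod 2) : zeroExt (xd β) = coboundary (zeroExt β) := by
  rw [← zeroExt_restrict (isHomogeneous_zeroExt β).coboundary]
  congr 1
  funext g
  exact xd_apply β g

lemma xd_xd (β : XFace n m → ZMod 2) : xd (xd β) = 0 := by
  funext g
  rw [← zeroExt_apply (xd (xd β)), zeroExt_xd, zeroExt_xd, coboundary_coboundary]
  rfl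

lemma xd_add (β γ : XFace n m → ZMod 2) : xd (β + γ) = xd β + xd γ := by
  funext g
  simp only [xd_apply, zeroExt_add, coboundary_add, Pi.add_apply]

/-- The cone with apex the vertex `±e_j` (sign `b`). -/
def cone (j : Fin n) (b : Bool) (B : SignedSet n → ZMod 2) (f : SignedSet n) : ZMod 2 :=
  if f j = none then B (update f j (some b)) else 0

variable {j : Fin n} {b : Bool} {B : SignedSet n → ZMod 2} {f : SignedSet n}

lemma IsHomogeneous.cone (hB : IsHomogeneous (m + 1) B) : IsHomogeneous m (cone j b B) := by
  intro f hf
  by_cases hj : f j = none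
  · rw [CrossPolytope.cone, if_pos hj] at hf
    have := hB _ hf
    rwa [dom_update_some hj, card_insert_of_notMem (by simp [hj]), Nat.add_right_cancel_iff]
      at this
  · exact absurd (if_neg hj) hf

lemma add_coboundary_cone_of_eq_none (hj : f j = none) :
    B f + coboundary (cone j b B) f = coboundary B (update f j (some b)) := by
  have hjf : j ∉ dom f := by simp [hj]
  rw [coboundary, coboundary, dom_update_some hj, sum_insert hjf, update_idem,
    update_eq_self_iff.2 hj.symm]
  congr 1
  refine sum_congr rfl fun i hi => ?_
  have hij : j ≠ i := fun h => hjf (h ▸ hi)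
  rw [cone, if_pos (by rwa [update_of_ne hij]), update_comm hij]

lemma coboundary_cone_of_ne_none (hj : f j ≠ none) :
    coboundary (cone j b B) f = B (update f j (some b)) := by
  rw [coboundary, sum_eq_single_of_mem j (mem_dom.2 hj), cone, if_pos (update_self ..),
    update_idem]
  intro i _ hij
  rw [cone, if_neg (by rwa [update_of_ne hij.symm])]

lemma card_filter_update_le (B : SignedSet n → ZMod 2) (j : Fin n) (c : Option Bool) (b : Bool) :
    (univ.filter fun f : SignedSet n => f j = c ∧ B (update f j (some b)) ≠ 0).card ≤
      ((supp B).filter fun g => g j = some b).card := by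
  refine card_le_card_of_injOn (update · j (some b)) (fun f hf => ?_)
    fun f₁ hf₁ f₂ hf₂ h => ?_
  · exact mem_filter.2 ⟨mem_filter.2 ⟨mem_univ _, (mem_filter.1 hf).2.2⟩, update_self ..⟩
  · funext i
    by_cases hi : i = j
    · rw [hi, (mem_filter.1 hf₁).2.1, (mem_filter.1 hf₂).2.1]
    · simpa [update_of_ne hi] using congrFun h i

lemma cnorm_add_coboundary_cone_le :
    cnorm (B + coboundary (cone j b B)) ≤ ((supp (coboundary B)).filter (· j = some b)).card +
      ((supp B).filter (· j = some !b)).card + ((supp B).filter (· j = some b)).card := by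
  have hsub : supp (B + coboundary (cone j b B)) ⊆
      (univ.filter fun f => f j = none ∧ coboundary B (update f j (some b)) ≠ 0) ∪
        (supp B).filter (· j = some !b) ∪
        (univ.filter fun f => f j = some !b ∧ B (update f j (some b)) ≠ 0) := by
    intro f hf
    replace hf : B f + coboundary (cone j b B) f ≠ 0 := (mem_filter.1 hf).2
    simp only [supp, mem_union, mem_filter, mem_univ, true_and]
    rcases hj : f j with _ | c
    · exact .inl (.inl ⟨rfl, by rwa [← add_coboundary_cone_of_eq_none hj]⟩)
    rw [coboundary_cone_of_ne_none (by simp [hj])] at hf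
    obtain rfl | rfl : c = b ∨ c = !b := by cases c <;> cases b <;> simp
    · rw [update_eq_self_iff.2 hj.symm, CharTwo.add_self_eq_zero] at hf
      exact absurd rfl hf
    · by_cases hBf : B f = 0
      · exact .inr ⟨rfl, by simpa [hBf] using hf⟩
      · exact .inl (.inr ⟨hBf, rfl⟩)
  calc cnorm (B + coboundary (cone j b B))
      ≤ _ := card_le_card hsub
    _ ≤ _ := (card_union_le _ _).trans (add_le_add_left (card_union_le _ _) _)
    _ ≤ _ := by
      have := card_filter_update_le (coboundary B) j none b
      have := card_filter_update_le B j (some !b) b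
      omega

lemma card_filter_eq_some_true_add_false (S : Finset (SignedSet n)) (j : Fin n) :
    (S.filter (· j = some true)).card + (S.filter (· j = some false)).card =
      (S.filter (· j ≠ none)).card := by
  rw [← card_union_of_disjoint (disjoint_filter.2 fun f _ h => by simp [h]), ← filter_or]
  congr 1
  refine filter_congr fun f _ => ?_
  rcases f j with _ | _ | _ <;> simp

lemma sum_card_filter_supp_ne_none {w : ℕ} (hB : IsHomogeneous w B) :
    ∑ j, ((supp B).filter (· j ≠ none)).card = w * cnorm B := by
  have := sum_card_bipartiteAbove_eq_sum_card_bipartiteBelow (s := univ) (t := supp B)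
    (r := fun j f => f j ≠ none)
  simp only [bipartiteAbove, bipartiteBelow] at this
  rw [this]
  exact (sum_const_nat fun f hf => hB f (mem_filter.1 hf).2).trans (mul_comm _ _)

theorem two_mul_mul_cnorm_le_of_cone_minimal {w : ℕ} (hB : IsHomogeneous w B)
    (hmin : ∀ j b, cnorm B ≤ cnorm (B + coboundary (cone j b B))) :
    2 * n * cnorm B ≤ (w + 1) * cnorm (coboundary B) + 2 * w * cnorm B := by
  set a := fun j b => ((supp (coboundary B)).filter (· j = some b)).card
  set c := fun j b => ((supp B).filter (· j = some b)).card
  calc 2 * n * cnorm B = ∑ j : Fin n, ∑ b : Bool, cnorm B := by simp; ring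
    _ ≤ ∑ j, ∑ b, (a j b + c j (!b) + c j b) := by
      gcongr with j _ b
      exact (hmin j b).trans cnorm_add_coboundary_cone_le
    _ = ∑ j, (((supp (coboundary B)).filter (· j ≠ none)).card +
          2 * ((supp B).filter (· j ≠ none)).card) := by
      refine sum_congr rfl fun j _ => ?_
      simp only [Fintype.sum_bool, Bool.not_true, Bool.not_false, a, c,
        ← card_filter_eq_some_true_add_false]
      ring
    _ = (w + 1) * cnorm (coboundary B) + 2 * w * cnorm B := by
      rw [sum_add_distrib, ← mul_sum, sum_card_filter_supp_ne_none hB.coboundary,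
        sum_card_filter_supp_ne_none hB]
      ring

theorem two_mul_mul_cnorm_le_of_forall_cnorm_le (β : XFace n (m + 1) → ZMod 2)
    (hmin : ∀ α : XFace n m → ZMod 2, cnorm β ≤ cnorm (β + xd α)) :
    2 * n * cnorm β ≤ (m + 2) * cnorm (xd β) + 2 * (m + 1) * cnorm β := by
  have hB := isHomogeneous_zeroExt β
  have := two_mul_mul_cnorm_le_of_cone_minimal hB fun j b => ?_
  · rwa [← zeroExt_xd, cnorm_zeroExt, cnorm_zeroExt] at this
  · rw [← zeroExt_restrict hB.cone, ← zeroExt_xd, ← zeroExt_add, cnorm_zeroExt,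
      cnorm_zeroExt]
    exact hmin _

lemma exists_cnorm_add_xd_eq_xqnorm (β : XFace n (m + 1) → ZMod 2) :
    ∃ α, cnorm (β + xd α) = xqnorm β := by
  have hne : {N | ∃ α : XFace n m → ZMod 2, N = cnorm (β + xd α)}.Nonempty := ⟨_, 0, rfl⟩
  obtain ⟨α, hα⟩ := Nat.sInf_mem hne
  exact ⟨α, hα.symm⟩

lemma xqnorm_le_cnorm_add_xd (β : XFace n (m + 1) → ZMod 2) (α : XFace n m → ZMod 2) :
    xqnorm β ≤ cnorm (β + xd α) :=
  Nat.sInf_le ⟨α, rfl⟩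

theorem two_mul_mul_xqnorm_le (β : XFace n (m + 1) → ZMod 2) :
    2 * n * xqnorm β ≤ (m + 2) * cnorm (xd β) + 2 * (m + 1) * xqnorm β := by
  obtain ⟨α₀, hα₀⟩ := exists_cnorm_add_xd_eq_xqnorm β
  have := two_mul_mul_cnorm_le_of_forall_cnorm_le (β + xd α₀) fun α => ?_
  · rwa [hα₀, xd_add, xd_xd, add_zero] at this
  · rw [hα₀, add_assoc, ← xd_add]
    exact xqnorm_le_cnorm_add_xd β _

end CrossPolytope

theorem cross_polytope_expansion_general (n k : ℕ) (hkn : k + 1 ≤ n - 1) :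
    (∀ β : XFace n (k + 1) → ZMod 2, ∃ α : XFace n k → ZMod 2,
      (cnorm (β + xd α) : ℝ) ≤
        (((k : ℝ) + 2) / (2 * ((n : ℝ) - (k : ℝ) - 1))) * (cnorm (xd β) : ℝ)) ∧
    (∀ β : XFace n (k + 1) → ZMod 2, ¬ IsXCob β →
      (cnorm (xd β) : ℝ) ≥
        (2 * ((n : ℝ) - (k : ℝ) - 1) / ((k : ℝ) + 2)) * (xqnorm β : ℝ)) := by
  have hgap : 0 < (n : ℝ) - k - 1 := by
    have : (k : ℝ) + 2 ≤ n := by exact_mod_cast (by omega : k + 2 ≤ n)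
    linarith
  have key (β : XFace n (k + 1) → ZMod 2) :
      2 * ((n : ℝ) - k - 1) * xqnorm β ≤ (k + 2) * cnorm (xd β) := by
    have : (2 * n * xqnorm β : ℝ) ≤ (k + 2) * cnorm (xd β) + 2 * (k + 1) * xqnorm β := by
      exact_mod_cast CrossPolytope.two_mul_mul_xqnorm_le β
    linarith
  refine ⟨fun β => ?_, fun β _ => ?_⟩
  · obtain ⟨α, hα⟩ := CrossPolytope.exists_cnorm_add_xd_eq_xqnorm β
    refine ⟨α, ?_⟩
    rw [hα, div_mul_eq_mul_div, le_div_iff₀ (by positivity)]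
    linarith [key β]
  · rw [ge_iff_le, div_mul_eq_mul_div, div_le_iff₀ (by positivity)]
    linarith [key β]

/-- for `n ≥ 1`, `k ≥ 1` with `k + 1 ≤ n - 1`, every `k`-cochain
`β` on the `n`-dimensional cross-polytope admits a `(k-1)`-cochain `α` with
`‖β + dα‖ ≤ ((k+2)/(2(n-k-1)))·‖dβ‖`; consequently
`h^k ≥ 2(n-k-1)/(k+2)`: every non-coboundary `β` satisfies
`‖dβ‖ ≥ (2(n-k-1)/(k+2))·‖[β]‖`. -/
theorem cross_polytope_expansion (n k : ℕ) (hn : 1 ≤ n) (hk : 1 ≤ k) (hkn : k + 1 ≤ n - 1) :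
    (∀ β : XFace n (k + 1) → ZMod 2, ∃ α : XFace n k → ZMod 2,
      (cnorm (β + xd α) : ℝ) ≤
        (((k : ℝ) + 2) / (2 * ((n : ℝ) - (k : ℝ) - 1))) * (cnorm (xd β) : ℝ)) ∧
    (∀ β : XFace n (k + 1) → ZMod 2, ¬ IsXCob β →
      (cnorm (xd β) : ℝ) ≥
        (2 * ((n : ℝ) - (k : ℝ) - 1) / ((k : ℝ) + 2)) * (xqnorm β : ℝ)) :=
  cross_polytope_expansion_general n k hkn
end

section
/- Let n ≥ 2 and k ≥ 0, and let (c_i)_{i ≥ 0} be the sequence of positive reals defined by c_0 = n and c_i = n · c_{i−1}/(c_{i−1} + 2n − 2) for i ≥ 1. Then c_k ≥ n/(2^{k+1} − 1) for all k ≥ 0. -/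
/-! In terms of `d i = n / c i` the recursion reads `d i = 1 + (2 - 2/n) d (i-1) ≤ 1 + 2 d (i-1)`
with `d 0 = 1`, so `d k ≤ 2^(k+1) - 1`. -/

theorem le_two_pow_succ_sub_one_of_le_two_mul_add_one {d : ℕ → ℝ} (h0 : d 0 ≤ 1)
    (hstep : ∀ i, d (i + 1) ≤ 1 + 2 * d i) (k : ℕ) : d k ≤ 2 ^ (k + 1) - 1 := by
  induction k with
  | zero => norm_num [h0]
  | succ k ih =>
    calc d (k + 1) ≤ 1 + 2 * d k := hstep k
      _ ≤ 1 + 2 * (2 ^ (k + 1) - 1) := by gcongr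
      _ = 2 ^ (k + 1 + 1) - 1 := by ring

/-- Positivity of the new term rules out the junk cases `a = 0` and `x + 2a - 2 = 0`. -/
theorem div_div_recursion_le {a x : ℝ} (hx : 0 < x) (hpos : 0 < a * x / (x + 2 * a - 2)) :
    a / (a * x / (x + 2 * a - 2)) ≤ 1 + 2 * (a / x) := by
  have ha : a ≠ 0 := by rintro rfl; simp at hpos
  have hD : x + 2 * a - 2 ≠ 0 := by intro h; simp [h] at hpos
  have hrecip : a / (a * x / (x + 2 * a - 2)) = 1 + (2 * a - 2) / x := by
    field_simp
    ring
  rw [hrecip, mul_div_assoc']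
  gcongr
  linarith

theorem partite_constant_recursion_general (n : ℕ) (c : ℕ → ℝ)
    (hpos : ∀ i, 0 < c i)
    (hbase : c 0 = (n : ℝ))
    (hrec : ∀ i, 1 ≤ i → c i = (n : ℝ) * c (i - 1) / (c (i - 1) + 2 * (n : ℝ) - 2)) :
    ∀ k : ℕ, (n : ℝ) / (2 ^ (k + 1) - 1) ≤ c k := by
  intro k
  have hn : (0 : ℝ) < n := hbase ▸ hpos 0
  have hratio : (n : ℝ) / c k ≤ 2 ^ (k + 1) - 1 := by
    refine le_two_pow_succ_sub_one_of_le_two_mul_add_one (d := fun i => n / c i)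
      (by simp [hbase, hn.ne']) (fun i => ?_) k
    have hci := hrec (i + 1) (by omega)
    rw [Nat.add_sub_cancel] at hci
    simpa only [hci] using div_div_recursion_le (hpos i) (hci ▸ hpos (i + 1))
  have hM : (0 : ℝ) < 2 ^ (k + 1) - 1 := by
    have : (1 : ℝ) < 2 ^ (k + 1) := one_lt_pow₀ (by norm_num) (by omega)
    linarith
  rw [div_le_iff₀ hM]
  rwa [div_le_iff₀ (hpos k), mul_comm] at hratio

/-- the recursion from the inductive proof of the coboundary
expansion bound for the complete `(k+2)`-partite complex. For `n ≥ 2`, if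
`(c_i)` is the sequence of positive reals with `c_0 = n` and
`c_i = n·c_{i-1}/(c_{i-1} + 2n - 2)` for `i ≥ 1`, then
`c_k ≥ n/(2^{k+1} - 1)` for all `k ≥ 0`. -/
theorem partite_constant_recursion (n : ℕ) (hn : 2 ≤ n) (c : ℕ → ℝ)
    (hpos : ∀ i, 0 < c i)
    (hbase : c 0 = (n : ℝ))
    (hrec : ∀ i, 1 ≤ i → c i = (n : ℝ) * c (i - 1) / (c (i - 1) + 2 * (n : ℝ) - 2)) :
    ∀ k : ℕ, (n : ℝ) / (2 ^ (k + 1) - 1) ≤ c k :=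
  partite_constant_recursion_general n c hpos hbase hrec
end

section
/- Fix k ≥ 1, let ω : ℕ → ℝ be any function tending to infinity, and let p : ℕ → [0,1] satisfy p(n) ≥ (2(k+1)(k+2)·log n + ω(n))/n for all n. Then asymptotically almost surely a random complex Y ∈ Y_k(n, p(n)) has vanishing k-th cohomology with Z/2 coefficients; that is, the probability that every k-cochain β on Δ_n with dβ(τ) = 0 for all (k+1)-faces τ ∈ Y is a coboundary tends to 1 as n → ∞. -/
/-!
The Meshulam–Wallach argument. Call a `k`-cochain `β` minimal if adding a coboundary never
shrinks its support. Coning off a vertex `v` gives `β + d(cone_v β) = cone_v (dβ)`, whose support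
is in bijection with the faces of `supp dβ` through `v`. Minimality therefore gives
`|β| ≤ #{τ ∈ supp dβ | v ∈ τ}` for every vertex, and summing over `v` yields
`n |β| ≤ (k + 2) |dβ|`.

If `H^k(Y) ≠ 0`, some nonzero minimal `β` has `dβ` vanishing on `Y`; for a fixed `β` this has
probability `(1 - p)^|dβ| ≤ r^|β|` with `r = exp (-p n / (k + 2))`. A union bound over all
nonzero `β` gives `(1 + r)^C(n, k+1) - 1 ≤ exp (n^(k+1) r) - 1 ≤ exp (exp (-ω / (k + 2))) - 1`,
which tends to `0`.
-/

open scoped Classical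

/-- A `k`-cochain is a coboundary if it is `dα` for some `(k-1)`-cochain `α`. -/
def IsCob {n k : ℕ} (β : SFace n (k + 1) → ZMod 2) : Prop :=
  ∃ α : SFace n k → ZMod 2, sd α = β

open Finset Filter Real

lemma Finset.sum_biUnion_le_sum_sum {α κ M : Type*} [DecidableEq α] [AddCommMonoid M]
    [PartialOrder M] [IsOrderedAddMonoid M] {f : α → M} (hf : ∀ a, 0 ≤ f a) (s : Finset κ)
    (t : κ → Finset α) :
    ∑ a ∈ s.biUnion t, f a ≤ ∑ i ∈ s, ∑ a ∈ t i, f a := by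
  rw [← sup_eq_biUnion]
  refine apply_sup_le_sum (f := fun A => ∑ a ∈ A, f a) sum_empty (fun {A B} => ?_) s
  rw [sup_eq_union, ← sum_union_inter]
  exact le_add_of_nonneg_right (sum_nonneg fun a _ => hf a)

lemma sum_pow_hammingNorm {ι R : Type*} [Fintype ι] [DecidableEq ι] [CommSemiring R] (r : R) :
    ∑ x : ι → ZMod 2, r ^ hammingNorm x = (1 + r) ^ Fintype.card ι := by
  have hprod : ∀ x : ι → ZMod 2, r ^ hammingNorm x = ∏ i, if x i = 0 then 1 else r := fun x => by
    rw [hammingNorm, ← prod_const, prod_filter]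
    simp only [ne_eq, ite_not]
  simp only [hprod]
  rw [← Fintype.prod_sum (fun (_ : ι) (z : ZMod 2) => if z = 0 then (1 : R) else r), prod_const,
    card_univ]
  exact congrArg (· ^ _) (Fin.sum_univ_two _)

section Bernoulli

variable {ι : Type*} [Fintype ι]

def bernoulliWeight (p : ℝ) (Y : Finset ι) : ℝ :=
  p ^ #Y * (1 - p) ^ (Fintype.card ι - #Y)

lemma bernoulliWeight_nonneg {p : ℝ} (hp0 : 0 ≤ p) (hp1 : p ≤ 1) (Y : Finset ι) :
    0 ≤ bernoulliWeight p Y :=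
  mul_nonneg (pow_nonneg hp0 _) (pow_nonneg (sub_nonneg.2 hp1) _)

lemma sum_bernoulliWeight_powerset (p : ℝ) (T : Finset ι) :
    ∑ Y ∈ T.powerset, bernoulliWeight p Y = (1 - p) ^ (Fintype.card ι - #T) := by
  have hT := card_le_univ T
  calc ∑ Y ∈ T.powerset, bernoulliWeight p Y
      = ∑ Y ∈ T.powerset, (1 - p) ^ (Fintype.card ι - #T) * (p ^ #Y * (1 - p) ^ (#T - #Y)) :=
        sum_congr rfl fun Y hY => by
          have := card_le_card (mem_powerset.1 hY)
          rw [bernoulliWeight, mul_left_comm, ← pow_add]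
          congr 3
          omega
    _ = (1 - p) ^ (Fintype.card ι - #T) := by
        rw [← mul_sum, sum_pow_mul_eq_add_pow, add_sub_cancel, one_pow, mul_one]

lemma sum_bernoulliWeight (p : ℝ) : ∑ Y : Finset ι, bernoulliWeight p Y = 1 := by
  simpa using sum_bernoulliWeight_powerset (ι := ι) p univ

lemma sum_ite_bernoulliWeight_eq_one_sub (p : ℝ) (E : Finset ι → Prop) [DecidablePred E] :
    ∑ Y, (if E Y then bernoulliWeight p Y else 0) = 1 - ∑ Y with ¬ E Y, bernoulliWeight p Y := by
  rw [← sum_filter, eq_sub_iff_add_eq, sum_filter_add_sum_filter_not, sum_bernoulliWeight]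

lemma sum_bernoulliWeight_forall_eq_zero [DecidableEq ι] {M : Type*} [Zero M] [DecidableEq M]
    (p : ℝ) (f : ι → M) :
    ∑ Y with ∀ a ∈ Y, f a = 0, bernoulliWeight p Y = (1 - p) ^ hammingNorm f := by
  have hevent : ({Y | ∀ a ∈ Y, f a = 0} : Finset (Finset ι))
      = ({a | f a = 0} : Finset ι).powerset := by
    ext Y
    simp [subset_iff]
  rw [hevent, sum_bernoulliWeight_powerset, hammingNorm, ← card_univ,
    ← card_filter_add_card_filter_not (s := univ) (fun a => f a = 0), Nat.add_sub_cancel_left]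

end Bernoulli

namespace LinialMeshulam

section Cochains

variable {n m : ℕ}

/-- Working with functions on all vertex sets avoids carrying cardinality proofs through the
face and coface manipulations below. -/
def extendByZero (β : SFace n m → ZMod 2) (s : Finset (Fin n)) : ZMod 2 :=
  if h : #s = m then β ⟨s, h⟩ else 0

@[simp]
lemma extendByZero_val (β : SFace n m → ZMod 2) (σ : SFace n m) :
    extendByZero β σ.1 = β σ :=
  dif_pos σ.2

lemma extendByZero_of_card_ne {β : SFace n m → ZMod 2} {s : Finset (Fin n)} (h : #s ≠ m) :
    extendByZero β s = 0 :=
  dif_neg h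

lemma card_of_extendByZero_ne_zero {β : SFace n m → ZMod 2} {s : Finset (Fin n)}
    (h : extendByZero β s ≠ 0) : #s = m :=
  not_not.1 fun hs => h (extendByZero_of_card_ne hs)

lemma hammingNorm_eq_card_extendByZero (β : SFace n m → ZMod 2) :
    hammingNorm β = #{s : Finset (Fin n) | extendByZero β s ≠ 0} := by
  refine card_bij (fun σ _ => σ.1) (fun σ hσ => by simpa using hσ)
    (fun σ _ τ _ h => Subtype.ext h) fun s hs => ?_
  have hs' := (mem_filter.1 hs).2
  have hcard := card_of_extendByZero_ne_zero hs'
  exact ⟨⟨s, hcard⟩, by simpa [extendByZero, hcard] using hs', rfl⟩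

lemma sd_apply (β : SFace n m → ZMod 2) (τ : SFace n (m + 1)) :
    sd β τ = ∑ x ∈ τ.1, extendByZero β (τ.1.erase x) := by
  rw [sd, ← sum_filter]
  symm
  refine sum_bij (fun x hx => ⟨τ.1.erase x, by rw [card_erase_of_mem hx, τ.2]; rfl⟩)
    (fun x _ => by simp [erase_subset])
    (fun x hx y _ h => (erase_inj _ hx).1 (congrArg Subtype.val h)) (fun σ hσ => ?_)
    fun x _ => dif_pos _
  obtain ⟨x, hxσ, hins⟩ := exists_eq_insert_iff.2 ⟨(mem_filter.1 hσ).2, by rw [σ.2, τ.2]⟩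
  exact ⟨x, hins ▸ mem_insert_self x σ.1, Subtype.ext (by simp [← hins, erase_insert hxσ])⟩

lemma extendByZero_sd (β : SFace n m → ZMod 2) (s : Finset (Fin n)) :
    extendByZero (sd β) s = ∑ x ∈ s, extendByZero β (s.erase x) := by
  by_cases hs : #s = m + 1
  · exact (dif_pos hs).trans (sd_apply β ⟨s, hs⟩)
  rw [extendByZero_of_card_ne hs]
  refine (sum_eq_zero fun x hx => extendByZero_of_card_ne ?_).symm
  have := card_pos.2 ⟨x, hx⟩
  rw [card_erase_of_mem hx]
  omega

lemma sd_add (α α' : SFace n m → ZMod 2) : sd (α + α') = sd α + sd α' := by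
  funext τ
  simp only [sd, Pi.add_apply, ← sum_add_distrib]
  exact sum_congr rfl fun σ _ => by split_ifs <;> simp

lemma sd_sd (α : SFace n m → ZMod 2) : sd (sd α) = 0 := by
  funext τ
  have hdiag : ∀ x ∈ τ.1, extendByZero α (τ.1.erase x) = 0 := fun x hx =>
    extendByZero_of_card_ne (by rw [card_erase_of_mem hx, τ.2]; omega)
  calc sd (sd α) τ = ∑ x ∈ τ.1, ∑ y ∈ τ.1, extendByZero α ((τ.1.erase x).erase y) := by
        refine (sd_apply _ τ).trans (sum_congr rfl fun x hx => ?_)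
        rw [extendByZero_sd, ← sum_erase τ.1 (by rw [erase_idem]; exact hdiag x hx)]
    _ = 0 := by
        rw [← sum_product']
        refine sum_involution (fun p _ => p.swap) (fun p _ => ?_) (fun p hp hne => ?_)
          (fun p hp => by simpa [and_comm] using hp) fun p _ => rfl
        · rw [Prod.fst_swap, Prod.snd_swap, erase_right_comm, ZModModule.add_self]
        · rintro hswap
          have hdiagonal : p.1 = p.2 := congrArg Prod.snd hswap
          rw [hdiagonal, erase_idem] at hne
          exact hne (hdiag _ (mem_product.1 hp).2)

def cone (v : Fin n) (β : SFace n (m + 1) → ZMod 2) : SFace n m → ZMod 2 :=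
  fun η => if v ∈ η.1 then 0 else extendByZero β (insert v η.1)

lemma extendByZero_cone (v : Fin n) (β : SFace n (m + 1) → ZMod 2) (s : Finset (Fin n)) :
    extendByZero (cone v β) s = if v ∈ s then 0 else extendByZero β (insert v s) := by
  by_cases hs : #s = m
  · exact extendByZero_val (cone v β) ⟨s, hs⟩
  rw [extendByZero_of_card_ne hs]
  split_ifs with hv
  · rfl
  · rw [extendByZero_of_card_ne (by rw [card_insert_of_notMem hv]; omega)]

lemma add_sd_cone (v : Fin n) (β : SFace n (m + 1) → ZMod 2) :
    β + sd (cone v β) = cone v (sd β) := by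
  funext σ
  simp only [Pi.add_apply, sd_apply, extendByZero_cone, cone]
  by_cases hv : v ∈ σ.1
  · rw [if_pos hv, sum_eq_single v, if_neg (notMem_erase v _), insert_erase hv, extendByZero_val,
      ZModModule.add_self]
    · exact fun x _ hxv => if_pos (mem_erase.2 ⟨Ne.symm hxv, hv⟩)
    · exact fun h => absurd hv h
  · rw [if_neg hv, extendByZero_sd, sum_insert hv, erase_insert hv, extendByZero_val]
    refine congrArg _ (sum_congr rfl fun x hx => ?_)
    rw [if_neg fun h => hv (mem_of_mem_erase h),
      erase_insert_of_ne (ne_of_mem_of_not_mem hx hv).symm]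

lemma hammingNorm_cone (v : Fin n) (γ : SFace n (m + 1) → ZMod 2) :
    hammingNorm (cone v γ) = #{t : Finset (Fin n) | v ∈ t ∧ extendByZero γ t ≠ 0} := by
  rw [hammingNorm_eq_card_extendByZero]
  refine card_nbij' (insert v) (·.erase v) ?_ ?_ ?_ ?_ <;> intro s hs <;>
    simp_all [extendByZero_cone]

lemma sum_hammingNorm_cone (γ : SFace n (m + 1) → ZMod 2) :
    ∑ v, hammingNorm (cone v γ) = (m + 1) * hammingNorm γ := by
  set T : Finset (Finset (Fin n)) := {t | extendByZero γ t ≠ 0}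
  calc ∑ v, hammingNorm (cone v γ) = ∑ v, #(T.bipartiteAbove (· ∈ ·) v) := by
        simp only [hammingNorm_cone, bipartiteAbove, T, filter_filter, and_comm]
    _ = ∑ t ∈ T, #(univ.bipartiteBelow (· ∈ ·) t) :=
        sum_card_bipartiteAbove_eq_sum_card_bipartiteBelow _
    _ = ∑ t ∈ T, (m + 1) := sum_congr rfl fun t ht => by
        simpa [bipartiteBelow] using card_of_extendByZero_ne_zero (mem_filter.1 ht).2
    _ = (m + 1) * hammingNorm γ := by
        rw [sum_const, smul_eq_mul, hammingNorm_eq_card_extendByZero, mul_comm]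

def IsMinimalCochain (β : SFace n (m + 1) → ZMod 2) : Prop :=
  ∀ α : SFace n m → ZMod 2, hammingNorm β ≤ hammingNorm (β + sd α)

lemma IsMinimalCochain.card_mul_hammingNorm_le {β : SFace n (m + 1) → ZMod 2}
    (hβ : IsMinimalCochain β) : n * hammingNorm β ≤ (m + 2) * hammingNorm (sd β) :=
  calc n * hammingNorm β = ∑ _v : Fin n, hammingNorm β := by simp
    _ ≤ ∑ v, hammingNorm (cone v (sd β)) :=
        sum_le_sum fun v _ => (hβ (cone v β)).trans_eq (by rw [add_sd_cone])
    _ = (m + 2) * hammingNorm (sd β) := sum_hammingNorm_cone (sd β)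

lemma exists_isMinimalCochain_of_not_isCob {β : SFace n (m + 1) → ZMod 2} (hβ : ¬ IsCob β) :
    ∃ β', β' ≠ 0 ∧ IsMinimalCochain β' ∧ sd β' = sd β := by
  obtain ⟨α, hα⟩ := Finite.exists_min fun α : SFace n m → ZMod 2 => hammingNorm (β + sd α)
  refine ⟨β + sd α, fun h => hβ ⟨α, ?_⟩, fun α' => ?_, by rw [sd_add, sd_sd, add_zero]⟩
  · rw [← sub_eq_zero, ZModModule.sub_eq_add, add_comm (sd α), h]
  · rw [add_assoc, ← sd_add]
    exact hα _

lemma IsMinimalCochain.one_sub_pow_hammingNorm_sd_le {β : SFace n (m + 1) → ZMod 2}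
    (hβ : IsMinimalCochain β) {p : ℝ} (hp0 : 0 ≤ p) (hp1 : p ≤ 1) :
    (1 - p) ^ hammingNorm (sd β) ≤ exp (-(p * n) / (m + 2)) ^ hammingNorm β := by
  have hiso : (n : ℝ) * hammingNorm β ≤ (m + 2) * hammingNorm (sd β) := by
    exact_mod_cast hβ.card_mul_hammingNorm_le
  calc (1 - p) ^ hammingNorm (sd β) ≤ exp (-p) ^ hammingNorm (sd β) :=
        pow_le_pow_left₀ (sub_nonneg.2 hp1) (by linarith [add_one_le_exp (-p)]) _
    _ = exp (-(p * ((m + 2) * hammingNorm (sd β))) / (m + 2)) := by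
        rw [← exp_nat_mul]
        field_simp
    _ ≤ exp (-(p * n) / (m + 2) * hammingNorm β) := by
        rw [exp_le_exp, div_mul_eq_mul_div, neg_mul, mul_assoc]
        gcongr
    _ = exp (-(p * n) / (m + 2)) ^ hammingNorm β := by
        rw [← exp_nat_mul, mul_comm]

end Cochains

/-- An `abbrev`, so that instance search decides it exactly as the event in the statement. -/
abbrev HasVanishingCohomology {n : ℕ} (k : ℕ) (Y : Finset (SFace n (k + 2))) : Prop :=
  ∀ β : SFace n (k + 1) → ZMod 2, (∀ τ ∈ Y, sd β τ = 0) → IsCob β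

lemma sum_bernoulliWeight_not_hasVanishingCohomology_le_sum (n k : ℕ) {p : ℝ} (hp0 : 0 ≤ p)
    (hp1 : p ≤ 1) :
    ∑ Y : Finset (SFace n (k + 2)) with ¬ HasVanishingCohomology k Y, bernoulliWeight p Y
      ≤ ∑ β : SFace n (k + 1) → ZMod 2 with β ≠ 0 ∧ IsMinimalCochain β,
          (1 - p) ^ hammingNorm (sd β) := by
  set M : Finset (SFace n (k + 1) → ZMod 2) := {β | β ≠ 0 ∧ IsMinimalCochain β}
  have hcover : ({Y | ¬ HasVanishingCohomology k Y} : Finset (Finset (SFace n (k + 2))))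
      ⊆ M.biUnion fun β => {Y | ∀ τ ∈ Y, sd β τ = 0} := by
    intro Y hY
    obtain ⟨β, hβY, hβ⟩ : ∃ β, (∀ τ ∈ Y, sd β τ = 0) ∧ ¬ IsCob β := by
      simpa [HasVanishingCohomology] using hY
    obtain ⟨β', hβ'0, hβ'min, hβ'sd⟩ := exists_isMinimalCochain_of_not_isCob hβ
    exact mem_biUnion.2 ⟨β', by simp [M, hβ'0, hβ'min], by simpa [hβ'sd] using hβY⟩
  calc _ ≤ ∑ Y ∈ M.biUnion fun β => {Y | ∀ τ ∈ Y, sd β τ = 0}, bernoulliWeight p Y :=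
        sum_le_sum_of_subset_of_nonneg hcover fun Y _ _ => bernoulliWeight_nonneg hp0 hp1 Y
    _ ≤ ∑ β ∈ M, ∑ Y with ∀ τ ∈ Y, sd β τ = 0, bernoulliWeight p Y :=
        sum_biUnion_le_sum_sum (bernoulliWeight_nonneg hp0 hp1) _ _
    _ = _ := sum_congr rfl fun β _ => sum_bernoulliWeight_forall_eq_zero p (sd β)

lemma sum_bernoulliWeight_not_hasVanishingCohomology_le (n k : ℕ) {p : ℝ} (hp0 : 0 ≤ p)
    (hp1 : p ≤ 1) :
    ∑ Y : Finset (SFace n (k + 2)) with ¬ HasVanishingCohomology k Y, bernoulliWeight p Y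
      ≤ exp (Fintype.card (SFace n (k + 1)) * exp (-(p * n) / (k + 2))) - 1 := by
  set r := exp (-(p * n) / (k + 2))
  calc _ ≤ ∑ β : SFace n (k + 1) → ZMod 2 with β ≠ 0 ∧ IsMinimalCochain β,
          (1 - p) ^ hammingNorm (sd β) :=
        sum_bernoulliWeight_not_hasVanishingCohomology_le_sum n k hp0 hp1
    _ ≤ ∑ β : SFace n (k + 1) → ZMod 2 with β ≠ 0 ∧ IsMinimalCochain β, r ^ hammingNorm β :=
        sum_le_sum fun β hβ => (mem_filter.1 hβ).2.2.one_sub_pow_hammingNorm_sd_le hp0 hp1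
    _ ≤ ∑ β ∈ univ.erase 0, r ^ hammingNorm β :=
        sum_le_sum_of_subset_of_nonneg
          (fun β hβ => mem_erase.2 ⟨(mem_filter.1 hβ).2.1, mem_univ _⟩) fun _ _ _ => by positivity
    _ = (1 + r) ^ Fintype.card (SFace n (k + 1)) - 1 := by
        rw [sum_erase_eq_sub (mem_univ 0), sum_pow_hammingNorm, hammingNorm_zero, pow_zero]
    _ ≤ exp r ^ Fintype.card (SFace n (k + 1)) - 1 := by
        gcongr
        linarith [add_one_le_exp r]
    _ = exp (Fintype.card (SFace n (k + 1)) * r) - 1 := by rw [exp_nat_mul]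

lemma card_sFace_mul_exp_le {n : ℕ} (k : ℕ) (hn : 1 ≤ n) {p ω : ℝ}
    (hp : (2 * ((k : ℝ) + 1) * ((k : ℝ) + 2) * log n + ω) / n ≤ p) :
    Fintype.card (SFace n (k + 1)) * exp (-(p * n) / (k + 2)) ≤ exp (-ω / (k + 2)) := by
  have hpn := (div_le_iff₀ (by positivity)).1 hp
  have hlog : 0 ≤ ((k : ℝ) + 1) * (k + 2) * log n :=
    mul_nonneg (by positivity) (log_nonneg (by exact_mod_cast hn))
  have hcard : (Fintype.card (SFace n (k + 1)) : ℝ) ≤ exp ((k + 1) * log n) := by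
    have hpow : (n : ℝ) ^ (k + 1) = exp ((k + 1) * log n) := by
      rw [← exp_log (by positivity : (0 : ℝ) < n ^ (k + 1)), log_pow]
      push_cast
      rfl
    rw [Fintype.card_finset_len, Fintype.card_fin, ← hpow]
    exact_mod_cast Nat.choose_le_pow n (k + 1)
  calc _ ≤ exp ((k + 1) * log n) * exp (-(p * n) / (k + 2)) := by gcongr
    _ ≤ exp (-ω / (k + 2)) := by
        rw [← exp_add, exp_le_exp, ← sub_nonneg]
        have hdiff : -ω / (k + 2) - ((k + 1) * log n + -(p * n) / (k + 2))
            = (p * n - ω - (k + 1) * (k + 2) * log n) / (k + 2) := by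
          field_simp
          ring
        rw [hdiff]
        exact div_nonneg (by linarith) (by positivity)

end LinialMeshulam

open LinialMeshulam

theorem linial_meshulam_cohomology_vanishing_general (k : ℕ)
    (ω : ℕ → ℝ) (hω : Filter.Tendsto ω Filter.atTop Filter.atTop)
    (p : ℕ → ℝ) (hp0 : ∀ n, 0 ≤ p n) (hp1 : ∀ n, p n ≤ 1)
    (hp : ∀ n : ℕ, p n ≥ (2 * ((k : ℝ) + 1) * ((k : ℝ) + 2) * Real.log n + ω n) / (n : ℝ)) :
    Filter.Tendsto
      (fun n : ℕ => ∑ Y : Finset (SFace n (k + 2)),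
        if ∀ β : SFace n (k + 1) → ZMod 2, (∀ τ ∈ Y, sd β τ = 0) → IsCob β
          then p n ^ Y.card * (1 - p n) ^ (Fintype.card (SFace n (k + 2)) - Y.card) else 0)
      Filter.atTop (nhds 1) := by
  have hbound : ∀ᶠ n in atTop,
      ∑ Y : Finset (SFace n (k + 2)) with ¬ HasVanishingCohomology k Y, bernoulliWeight (p n) Y
        ≤ exp (exp (-ω n / (k + 2))) - 1 := by
    filter_upwards [eventually_ge_atTop 1] with n hn
    refine (sum_bernoulliWeight_not_hasVanishingCohomology_le n k (hp0 n) (hp1 n)).trans ?_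
    gcongr
    exact card_sFace_mul_exp_le k hn (hp n)
  have hlim : Tendsto (fun n => exp (exp (-ω n / (k + 2))) - 1) atTop (nhds 0) := by
    have hexp := tendsto_exp_atBot.comp ((tendsto_neg_atTop_atBot.comp hω).atBot_div_const
      (by positivity : (0 : ℝ) < k + 2))
    simpa using ((continuous_exp.tendsto 0).comp hexp).sub_const 1
  have hbad := squeeze_zero' (Eventually.of_forall fun n =>
    sum_nonneg fun Y _ => bernoulliWeight_nonneg (hp0 n) (hp1 n) Y) hbound hlim
  have hgood := hbad.const_sub 1
  rw [sub_zero] at hgood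
  exact hgood.congr fun n =>
    (sum_ite_bernoulliWeight_eq_one_sub (p n) (HasVanishingCohomology (n := n) k)).symm

/-- vanishing of the `k`-th `ZMod 2` cohomology of the
Linial–Meshulam random complex `Y ∈ Y_k(n, p(n))`. Fix `k ≥ 1`, `ω → ∞`, and
`p(n) ≥ (2(k+1)(k+2)·log n + ω(n))/n`. Then the probability (a weighted sum
over all sets `Y` of `(k+1)`-faces, each face kept independently with
probability `p(n)`) of the event that every `k`-cochain `β` with `dβ = 0` on
all faces of `Y` is a coboundary — i.e. `H^k(Y; ZMod 2) = 0` — tends to `1`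
as `n → ∞`. -/
theorem linial_meshulam_cohomology_vanishing (k : ℕ) (hk : 1 ≤ k)
    (ω : ℕ → ℝ) (hω : Filter.Tendsto ω Filter.atTop Filter.atTop)
    (p : ℕ → ℝ) (hp0 : ∀ n, 0 ≤ p n) (hp1 : ∀ n, p n ≤ 1)
    (hp : ∀ n : ℕ, p n ≥ (2 * ((k : ℝ) + 1) * ((k : ℝ) + 2) * Real.log n + ω n) / (n : ℝ)) :
    Filter.Tendsto
      (fun n : ℕ => ∑ Y : Finset (SFace n (k + 2)),
        if ∀ β : SFace n (k + 1) → ZMod 2, (∀ τ ∈ Y, sd β τ = 0) → IsCob β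
          then p n ^ Y.card * (1 - p n) ^ (Fintype.card (SFace n (k + 2)) - Y.card) else 0)
      Filter.atTop (nhds 1) :=
  linial_meshulam_cohomology_vanishing_general k ω hω p hp0 hp1 hp
end

section
/- Fix j ≥ 0. Let n > j + 1, and suppose that for every (j)-cycle z' in the (n−1)-dimensional cube Q_{n−1} with Z/2 coefficients there exists a (j+1)-chain y' with ∂y' = z' and vol_{j+1}(y') ≤ C·vol_j(z') for some constant C ≥ 0. Then every j-cycle z in Q_n with Z/2 coefficients admits a (j+1)-chain y with ∂y = z and vol_{j+1}(y) ≤ ((n−j)/(2n))·(1 + 2C)·vol_j(z). -/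
/-!
Fix a direction `i` and a side `c`. Sweeping the part of `z` on the facet `{x_i = c}` across the
cube in direction `i` gives a `(j+1)`-chain whose boundary is `z` plus a copy, on the opposite
facet, of the projection of `z` along `i`. That projection is a `j`-cycle of `Q_{n-1}`, which the
hypothesis fills at cost `C` times its volume, and the copy of that filling on the opposite facet
cancels the extra boundary. Each `j`-face of `z` lies on exactly `n - j` of the `2n` facets, so
some direction carries restricted volume at most `(n - j) / n · vol z`, and its lighter side at
most half of that.
-/

namespace CubeChain

open Finset Function

variable {m n K : ℕ}

def numFree (f : Fin n → Option Bool) : ℕ :=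
  #{i | f i = none}

lemma numFree_update_none {f : Fin n → Option Bool} {i : Fin n} (hi : f i ≠ none) :
    numFree (update f i none) = numFree f + 1 := by
  have : univ.filter (fun t => update f i none t = none) =
      insert i (univ.filter (f · = none)) := by
    ext t
    rcases eq_or_ne t i with rfl | ht <;> simp [*]
  rw [numFree, numFree, this, card_insert_of_notMem (by simpa using hi)]

lemma numFree_insertNth (i : Fin (m + 1)) (a : Option Bool) (g : Fin m → Option Bool) :
    numFree (i.insertNth a g) = (if a = none then 1 else 0) + numFree g := by
  simp only [numFree, card_filter, Fin.sum_univ_succAbove _ i, Fin.insertNth_apply_same,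
    Fin.insertNth_apply_succAbove]

lemma numFree_eq_add_numFree_removeNth (f : Fin (m + 1) → Option Bool) (i : Fin (m + 1)) :
    numFree f = (if f i = none then 1 else 0) + numFree (i.removeNth f) := by
  rw [← numFree_insertNth, Fin.insertNth_self_removeNth]

lemma card_filter_ne_none (f : Fin n → Option Bool) : #{i | f i ≠ none} = n - numFree f := by
  have h := card_filter_add_card_filter_not (s := univ) (fun i => f i = none)
  simp only [card_univ, Fintype.card_fin, ← ne_eq] at h
  rw [numFree]
  omega

/-- A chain extended by zero to all of `Fin n → Option Bool`: identities between chains of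
different dimensions become identities between plain functions. -/
def extend (z : QFace n K → ZMod 2) (f : Fin n → Option Bool) : ZMod 2 :=
  if h : numFree f = K then z ⟨f, h⟩ else 0

@[simp]
lemma extend_val (z : QFace n K → ZMod 2) (f : QFace n K) : extend z f.1 = z f :=
  dif_pos f.2

lemma extend_of_numFree_ne (z : QFace n K → ZMod 2) {f : Fin n → Option Bool}
    (hf : numFree f ≠ K) : extend z f = 0 :=
  dif_neg hf

lemma numFree_of_extend_ne_zero {z : QFace n K → ZMod 2} {f : Fin n → Option Bool}
    (hf : extend z f ≠ 0) : numFree f = K :=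
  not_imp_comm.1 (extend_of_numFree_ne z) hf

lemma extend_injective : Injective (extend : (QFace n K → ZMod 2) → _) :=
  fun x y h => funext fun f => by rw [← extend_val x, ← extend_val y, h]

lemma extend_eq_of_forall {z : QFace n K → ZMod 2} {F : (Fin n → Option Bool) → ZMod 2}
    (hz : ∀ g, z g = F g.1) (hF : ∀ f, numFree f ≠ K → F f = 0) : extend z = F := by
  funext f
  by_cases hf : numFree f = K
  · exact (extend_val z ⟨f, hf⟩).trans (hz _)
  · rw [extend_of_numFree_ne _ hf, hF f hf]

@[simp]
lemma extend_zero : extend (0 : QFace n K → ZMod 2) = 0 :=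
  funext fun f => by unfold extend; split_ifs <;> rfl

lemma extend_add (x y : QFace n K → ZMod 2) (f : Fin n → Option Bool) :
    extend (x + y) f = extend x f + extend y f := by
  unfold extend
  split_ifs <;> simp

lemma qbdry_apply (z : QFace n (K + 1) → ZMod 2) (g : QFace n K) :
    qbdry z g = ∑ i, if g.1 i ≠ none then extend z (update g.1 i none) else 0 := by
  rw [qbdry, ← sum_filter, ← sum_filter]
  symm
  refine sum_bij (fun i hi => ⟨update g.1 i none, ?_⟩) ?_ ?_ ?_ ?_
  · show numFree (update g.1 i none) = K + 1
    rw [numFree_update_none (mem_filter.1 hi).2]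
    exact congrArg (· + 1) g.2
  · intro i hi
    simp only [mem_filter, mem_univ, true_and] at hi ⊢
    exact ⟨i, hi, rfl⟩
  · intro i hi i' _ h
    by_contra hne
    have : update g.1 i none i = update g.1 i' none i := congrFun (congrArg Subtype.val h) i
    rw [update_self, update_of_ne hne] at this
    exact (mem_filter.1 hi).2 this.symm
  · intro f hf
    obtain ⟨i, hi, hf⟩ := (mem_filter.1 hf).2
    exact ⟨i, mem_filter.2 ⟨mem_univ _, hi⟩, Subtype.ext hf.symm⟩
  · intro i _
    exact extend_val z ⟨_, _⟩

lemma extend_qbdry (z : QFace n (K + 1) → ZMod 2) :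
    extend (qbdry z) = fun f => ∑ i, if f i ≠ none then extend z (update f i none) else 0 := by
  refine extend_eq_of_forall (qbdry_apply z) fun f hf => sum_eq_zero fun i _ => ?_
  split_ifs with hi
  · exact extend_of_numFree_ne z (by rw [numFree_update_none hi]; omega)
  · rfl

lemma qbdry_add (x y : QFace n (K + 1) → ZMod 2) : qbdry (x + y) = qbdry x + qbdry y := by
  funext g
  simp only [qbdry, Pi.add_apply, ← sum_add_distrib]
  exact sum_congr rfl fun f _ => by split_ifs <;> simp

def faceRestrict (i : Fin (m + 1)) (c : Bool) (z : QFace (m + 1) K → ZMod 2) :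
    QFace m K → ZMod 2 :=
  fun g => extend z (i.insertNth (some c) g.1)

lemma extend_faceRestrict (i : Fin (m + 1)) (c : Bool) (z : QFace (m + 1) K → ZMod 2) :
    extend (faceRestrict i c z) = fun f => extend z (i.insertNth (some c) f) :=
  extend_eq_of_forall (fun _ => rfl) fun f hf =>
    extend_of_numFree_ne z (by simpa [numFree_insertNth] using hf)

/-- The chain map of the projection forgetting coordinate `i`: faces with free `i`-th coordinate
drop in dimension and contribute nothing. -/
def project (i : Fin (m + 1)) (z : QFace (m + 1) K → ZMod 2) : QFace m K → ZMod 2 :=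
  faceRestrict i false z + faceRestrict i true z

def faceInclusion (i : Fin (m + 1)) (b : Bool) (y : QFace m K → ZMod 2) :
    QFace (m + 1) K → ZMod 2 :=
  fun g => if g.1 i = some b then extend y (i.removeNth g.1) else 0

lemma extend_faceInclusion (i : Fin (m + 1)) (b : Bool) (y : QFace m K → ZMod 2) :
    extend (faceInclusion i b y) =
      fun f => if f i = some b then extend y (i.removeNth f) else 0 :=
  extend_eq_of_forall (fun _ => rfl) fun f hf => by
    split_ifs with hb
    · rw [numFree_eq_add_numFree_removeNth f i, hb] at hf
      exact extend_of_numFree_ne y (by simpa using hf)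
    · rfl

/-- The product `y × [0, 1]`, with the interval in coordinate `i`. -/
def cylinder (i : Fin (m + 1)) (y : QFace m K → ZMod 2) : QFace (m + 1) (K + 1) → ZMod 2 :=
  fun g => if g.1 i = none then extend y (i.removeNth g.1) else 0

lemma extend_cylinder (i : Fin (m + 1)) (y : QFace m K → ZMod 2) :
    extend (cylinder i y) = fun f => if f i = none then extend y (i.removeNth f) else 0 :=
  extend_eq_of_forall (fun _ => rfl) fun f hf => by
    split_ifs with hb
    · rw [numFree_eq_add_numFree_removeNth f i, hb] at hf
      exact extend_of_numFree_ne y (by simp only [↓reduceIte] at hf; omega)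
    · rfl

lemma qbdry_project (i : Fin (m + 1)) (z : QFace (m + 1) (K + 1) → ZMod 2) :
    qbdry (project i z) = project i (qbdry z) := by
  refine extend_injective (funext fun f => ?_)
  simp only [project, extend_add, extend_qbdry, extend_faceRestrict, Fin.sum_univ_succAbove _ i,
    Fin.insertNth_apply_same, Fin.insertNth_apply_succAbove, Fin.update_insertNth, ne_eq,
    reduceCtorEq, not_false_eq_true, if_true]
  rw [add_add_add_comm, CharTwo.add_self_eq_zero, zero_add, ← sum_add_distrib]
  exact sum_congr rfl fun t _ => by split_ifs <;> simp

lemma IsQCycle.project {z : QFace (m + 1) K → ZMod 2} (hz : IsQCycle (m + 1) K z)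
    (i : Fin (m + 1)) : IsQCycle m K (project i z) := by
  cases K with
  | zero =>
    obtain ⟨y, rfl⟩ := hz
    exact ⟨project i y, qbdry_project i y⟩
  | succ K =>
    show qbdry _ = 0
    rw [qbdry_project, show qbdry z = 0 from hz]
    funext g
    simp [CubeChain.project, faceRestrict, extend]

lemma qbdry_faceInclusion (i : Fin (m + 1)) (b : Bool) (y : QFace m (K + 1) → ZMod 2) :
    qbdry (faceInclusion i b y) = faceInclusion i b (qbdry y) := by
  refine extend_injective (funext fun f => ?_)
  simp only [extend_qbdry, ne_eq, extend_faceInclusion, ite_not, Fin.sum_univ_succAbove _ i,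
    update_self, reduceCtorEq, ↓reduceIte, ite_self, Fin.ne_succAbove, not_false_eq_true,
    update_of_ne, Fin.removeNth_update_succAbove, zero_add]
  split_ifs
  · rfl
  · simp

lemma extend_qbdry_cylinder_faceRestrict_of_ne_none (i : Fin (m + 1)) (c : Bool)
    (z : QFace (m + 1) K → ZMod 2) {f : Fin (m + 1) → Option Bool} (hf : f i ≠ none) :
    extend (qbdry (cylinder i (faceRestrict i c z))) f = extend z (update f i (some c)) := by
  simp [extend_qbdry, extend_cylinder, extend_faceRestrict, Fin.sum_univ_succAbove _ i, hf]

lemma extend_qbdry_cylinder_faceRestrict_of_eq_none (i : Fin (m + 1)) (c : Bool)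
    {z : QFace (m + 1) (K + 1) → ZMod 2} (hz : qbdry z = 0) {f : Fin (m + 1) → Option Bool}
    (hf : f i = none) :
    extend (qbdry (cylinder i (faceRestrict i c z))) f = extend z f := by
  -- `qbdry z` at `f` with `x_i := c` is `z f` plus the boundary sum on the left.
  have hcycle := congrFun (congrArg extend hz) (update f i (some c))
  have hswap : ∀ t, update (update f i (some c)) (i.succAbove t) none =
      update (update f (i.succAbove t) none) i (some c) :=
    fun t => update_comm (Fin.succAbove_ne i t).symm _ _ _
  have hfix : update f i none = f := by rw [← hf, update_eq_self]
  simp only [extend_qbdry, Fin.sum_univ_succAbove _ i, update_self, update_idem, hfix, hswap,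
    update_of_ne (Fin.succAbove_ne i _), extend_zero, Pi.zero_apply, ne_eq, reduceCtorEq,
    not_false_eq_true, if_true, CharTwo.add_eq_zero] at hcycle
  simp only [extend_qbdry, extend_cylinder, extend_faceRestrict, Fin.sum_univ_succAbove _ i, hf,
    update_self, update_of_ne (Fin.ne_succAbove i _), Fin.insertNth_removeNth, ne_eq,
    not_true_eq_false, if_false, if_true, zero_add]
  exact hcycle.symm

lemma qbdry_cylinder_faceRestrict {z : QFace (m + 1) K → ZMod 2} (hz : IsQCycle (m + 1) K z)
    (i : Fin (m + 1)) (c : Bool) :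
    qbdry (cylinder i (faceRestrict i c z)) = z + faceInclusion i (!c) (project i z) := by
  refine extend_injective (funext fun f => ?_)
  simp only [extend_add, extend_faceInclusion, project, extend_faceRestrict,
    Fin.insertNth_removeNth]
  rcases hfi : f i with _ | c'
  · cases K with
    | zero =>
      have hf : numFree f ≠ 0 := by simp [numFree_eq_add_numFree_removeNth f i, hfi]
      simp [extend_of_numFree_ne _ hf]
    | succ K => simp [extend_qbdry_cylinder_faceRestrict_of_eq_none i c hz hfi]
  · have hfix : update f i (some c') = f := by rw [← hfi, update_eq_self]
    rw [extend_qbdry_cylinder_faceRestrict_of_ne_none i c z (by simp [hfi])]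
    cases c <;> cases c' <;> grind

lemma vol_add_le {X : Type} [Fintype X] (x y : X → ZMod 2) : vol (x + y) ≤ vol x + vol y := by
  classical
  refine (card_le_card fun a ha => ?_).trans (card_union_le _ _)
  simp only [mem_filter, mem_univ, true_and, mem_union, Pi.add_apply] at ha ⊢
  by_contra! h
  simp [h.1, h.2] at ha

lemma vol_eq_card_extend_ne_zero (z : QFace n K → ZMod 2) : vol z = #{f | extend z f ≠ 0} := by
  refine card_bij (fun g _ => g.1) (fun g hg => by simpa using hg)
    (fun _ _ _ _ => Subtype.ext) fun f hf => ?_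
  have hf : extend z f ≠ 0 := (mem_filter.1 hf).2
  exact ⟨⟨f, numFree_of_extend_ne_zero hf⟩,
    by simpa [extend, numFree_of_extend_ne_zero hf] using hf, rfl⟩

lemma vol_le_of_extend_eq_ite {K' : ℕ} (i : Fin (m + 1)) (a : Option Bool)
    {x : QFace (m + 1) K' → ZMod 2} {y : QFace m K → ZMod 2}
    (hx : extend x = fun f => if f i = a then extend y (i.removeNth f) else 0) :
    vol x ≤ vol y := by
  rw [vol_eq_card_extend_ne_zero, vol_eq_card_extend_ne_zero, hx]
  have hsupp (f : Fin (m + 1) → Option Bool)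
      (hf : (if f i = a then extend y (i.removeNth f) else 0) ≠ 0) :
      f i = a ∧ extend y (i.removeNth f) ≠ 0 :=
    ite_ne_right_iff.1 hf
  refine card_le_card_of_injOn i.removeNth
    (fun f hf => by simpa using (hsupp f (by simpa using hf)).2) fun f₁ hf₁ f₂ hf₂ h => ?_
  rw [← Fin.insertNth_self_removeNth i f₁, ← Fin.insertNth_self_removeNth i f₂, h,
    (hsupp f₁ (by simpa using hf₁)).1, (hsupp f₂ (by simpa using hf₂)).1]

lemma vol_faceInclusion_le (i : Fin (m + 1)) (b : Bool) (y : QFace m K → ZMod 2) :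
    vol (faceInclusion i b y) ≤ vol y :=
  vol_le_of_extend_eq_ite i _ (extend_faceInclusion i b y)

lemma vol_cylinder_le (i : Fin (m + 1)) (y : QFace m K → ZMod 2) : vol (cylinder i y) ≤ vol y :=
  vol_le_of_extend_eq_ite i _ (extend_cylinder i y)

lemma vol_faceRestrict (i : Fin (m + 1)) (c : Bool) (z : QFace (m + 1) K → ZMod 2) :
    vol (faceRestrict i c z) = #{f | extend z f ≠ 0 ∧ f i = some c} := by
  rw [vol_eq_card_extend_ne_zero, extend_faceRestrict]
  refine card_nbij' (fun g : Fin m → Option Bool => i.insertNth (some c) g) i.removeNth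
    (fun g hg => by simpa using hg) (fun f hf => ?_) (fun g _ => by simp) fun f hf => ?_ <;>
  obtain ⟨hz, hc⟩ : extend z f ≠ 0 ∧ f i = some c := by simpa using hf
  · simpa [← hc] using hz
  · simp [← hc]

/-- Double counting: each `K`-face of `z` has `m + 1 - K` bound coordinates, and lies on the
facet `{x_i = c}` exactly for the bound coordinates `i` with their values `c`. -/
lemma sum_vol_faceRestrict (z : QFace (m + 1) K → ZMod 2) :
    ∑ i, (vol (faceRestrict i false z) + vol (faceRestrict i true z)) = (m + 1 - K) * vol z := by
  set S : Finset (Fin (m + 1) → Option Bool) := {f | extend z f ≠ 0}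
  have hpair : ∀ i, vol (faceRestrict i false z) + vol (faceRestrict i true z) =
      ∑ f ∈ S, if f i ≠ none then 1 else 0 := fun i => by
    simp only [vol_faceRestrict, ← filter_filter, card_filter, ← sum_add_distrib]
    refine sum_congr rfl fun f _ => ?_
    rcases f i with _ | _ | _ <;> simp
  have hfree : ∀ f ∈ S, ∑ i, (if f i ≠ none then 1 else 0) = m + 1 - K := fun f hf => by
    rw [← card_filter, card_filter_ne_none, numFree_of_extend_ne_zero (mem_filter.1 hf).2]
  rw [sum_congr rfl fun i _ => hpair i, sum_comm, sum_congr rfl hfree, sum_const, smul_eq_mul,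
    vol_eq_card_extend_ne_zero, mul_comm]

lemma exists_vol_faceRestrict_le_and_vol_project_le (z : QFace (m + 1) K → ZMod 2) :
    ∃ i c, 2 * (m + 1) * vol (faceRestrict i c z) ≤ (m + 1 - K) * vol z ∧
      (m + 1) * vol (project i z) ≤ (m + 1 - K) * vol z := by
  obtain ⟨i, -, hi⟩ := exists_le_of_sum_le (s := univ) univ_nonempty
    (f := fun i => (m + 1) * (vol (faceRestrict i false z) + vol (faceRestrict i true z)))
    (g := fun _ => (m + 1 - K) * vol z)
    (by rw [← mul_sum, sum_vol_faceRestrict, sum_const, card_univ, Fintype.card_fin, smul_eq_mul])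
  have hproj : vol (project i z) ≤ vol (faceRestrict i false z) + vol (faceRestrict i true z) :=
    vol_add_le _ _
  rcases le_total (vol (faceRestrict i false z)) (vol (faceRestrict i true z)) with h | h
  · exact ⟨i, false, by nlinarith, by nlinarith⟩
  · exact ⟨i, true, by nlinarith, by nlinarith⟩

end CubeChain

open CubeChain in
/-- the inductive step of the cube isoperimetric inequality.
If every `j`-cycle `z'` in `Q_{n-1}` (where `n > j + 1`) can be filled by a
`(j+1)`-chain `y'` with `vol(y') ≤ C·vol(z')`, then every `j`-cycle `z` in
`Q_n` can be filled by a `(j+1)`-chain `y` with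
`vol(y) ≤ ((n-j)/(2n))·(1 + 2C)·vol(z)`. -/
theorem cube_filling_inductive_step (j n : ℕ) (hn : j + 1 < n) (C : ℝ) (hC : 0 ≤ C)
    (ih : ∀ z' : QFace (n - 1) j → ZMod 2, IsQCycle (n - 1) j z' →
      ∃ y' : QFace (n - 1) (j + 1) → ZMod 2, qbdry y' = z' ∧
        (vol y' : ℝ) ≤ C * (vol z' : ℝ))
    (z : QFace n j → ZMod 2) (hz : IsQCycle n j z) :
    ∃ y : QFace n (j + 1) → ZMod 2, qbdry y = z ∧
      (vol y : ℝ) ≤ (((n : ℝ) - j) / (2 * n)) * (1 + 2 * C) * (vol z : ℝ) := by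
  obtain ⟨m, rfl⟩ : ∃ m, n = m + 1 := ⟨n - 1, by omega⟩
  obtain ⟨i, c, hface, hproj⟩ := exists_vol_faceRestrict_le_and_vol_project_le z
  obtain ⟨y', hy', hvol'⟩ := ih (project i z) (hz.project i)
  refine ⟨cylinder i (faceRestrict i c z) + faceInclusion i (!c) y', ?_, ?_⟩
  · rw [qbdry_add, qbdry_cylinder_faceRestrict hz, qbdry_faceInclusion, hy']
    exact funext fun g => CharTwo.add_cancel_right (z g) _
  have hvol : (vol (cylinder i (faceRestrict i c z) + faceInclusion i (!c) y') : ℝ) ≤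
      vol (faceRestrict i c z) + vol y' := by
    exact_mod_cast
      (vol_add_le _ _).trans (add_le_add (vol_cylinder_le _ _) (vol_faceInclusion_le _ _ _))
  have hcast : ((m + 1 - j : ℕ) : ℝ) = ((m + 1 : ℕ) : ℝ) - j := Nat.cast_sub (by omega)
  have hface : 2 * ((m + 1 : ℕ) : ℝ) * vol (faceRestrict i c z) ≤
      ((m + 1 - j : ℕ) : ℝ) * vol z := by exact_mod_cast hface
  have hproj : ((m + 1 : ℕ) : ℝ) * vol (project i z) ≤ ((m + 1 - j : ℕ) : ℝ) * vol z := by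
    exact_mod_cast hproj
  rw [← hcast, div_mul_eq_mul_div, div_mul_eq_mul_div, le_div_iff₀ (by positivity)]
  nlinarith [mul_le_mul_of_nonneg_left hproj hC]
end
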